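/- arXiv:1504.00830 — 6 statements merged into one kernel-verified Lean document; each statement's English description precedes it below -/
import Mathlib

section
/- Let α ∈ (0, 1/2) with α ≠ 1/4. There exists a constant C (depending only on α) such that for every nonnegative L-periodic function η of class H² (say smooth and L-periodic, η ≥ 0), one has ∫₀ᴸ |η'(x)|⁴ / η(x)^{4α} dx ≤ C ‖η''‖_{L²(0,L)}² ‖η‖_{L^∞(0,L)}^{2(1-2α)} (with the convention that the integrand is interpreted suitably where η vanishes, e.g. assuming η > 0). -/
open MeasureTheory intervalIntegral

theorem stmt1 (α : ℝ) (hα : α ∈ Set.Ioo (0:ℝ) (1/2)) (hα4 : α ≠ 1/4) :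
    ∃ C : ℝ, 0 < C ∧ ∀ L : ℝ, 0 < L → ∀ η : ℝ → ℝ, ContDiff ℝ (⊤ : ℕ∞) η →
      Function.Periodic η L → (∀ x, 0 < η x) →
      (∫ x in (0:ℝ)..L, (deriv η x) ^ 4 / (η x) ^ (4 * α)) ≤
        C * (∫ x in (0:ℝ)..L, (deriv (deriv η) x) ^ 2) *
          (sSup ((fun x => |η x|) '' Set.Icc 0 L)) ^ (2 * (1 - 2 * α)) := by
  obtain ⟨hα0, hα2⟩ := hα
  set p : ℝ := 1 - 4 * α with hpdef
  have hpne : p ≠ 0 := by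
    intro h; apply hα4; rw [hpdef] at h; linarith
  have hp2 : (0:ℝ) < p ^ 2 := by positivity
  refine ⟨9 / p ^ 2, by positivity, ?_⟩
  intro L hL η hη hper hpos
  have hηne : ∀ x, η x ≠ 0 := fun x => (hpos x).ne'
  have hηd : Differentiable ℝ η := hη.differentiable (by simp)
  have hηc : Continuous η := hη.continuous
  have hη' : ContDiff ℝ ((⊤:ℕ∞) : WithTop ℕ∞) η := hη.of_le (by simp)
  have hgcd : ContDiff ℝ ((⊤:ℕ∞) : WithTop ℕ∞) (deriv η) := (contDiff_infty_iff_deriv.mp hη').2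
  have hgd : Differentiable ℝ (deriv η) := hgcd.differentiable (by simp)
  have hgc : Continuous (deriv η) := hgd.continuous
  have hg'c : Continuous (deriv (deriv η)) := ((contDiff_infty_iff_deriv.mp hgcd).2).continuous
  have crp : ∀ c : ℝ, Continuous fun x => η x ^ c := fun c =>
    hηc.rpow_const (fun x => Or.inl (hηne x))
  -- abbreviations
  set M : ℝ := sSup ((fun x => |η x|) '' Set.Icc 0 L) with hMdef
  set I : ℝ := ∫ x in (0:ℝ)..L, (deriv η x) ^ 4 / (η x) ^ (4 * α) with hIdef
  set J : ℝ := ∫ x in (0:ℝ)..L, (deriv (deriv η) x) ^ 2 with hJdef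
  set B : ℝ := ∫ x in (0:ℝ)..L, η x ^ (-(2*α)) * (deriv η x) ^ 2 * |deriv (deriv η) x| with hBdef
  set K : ℝ := ∫ x in (0:ℝ)..L, η x ^ p * ((deriv η x) ^ 2 * deriv (deriv η) x) with hKdef
  -- sup facts
  have hbdd : BddAbove ((fun x => |η x|) '' Set.Icc 0 L) :=
    (isCompact_Icc.image (hηc.abs)).bddAbove
  have hMge : ∀ x ∈ Set.Icc (0:ℝ) L, η x ≤ M := fun x hx =>
    (le_abs_self _).trans (le_csSup hbdd ⟨x, hx, rfl⟩)
  have hMpos : 0 < M := lt_of_lt_of_le (hpos 0) (hMge 0 ⟨le_rfl, hL.le⟩)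
  set M' : ℝ := M ^ (1 - 2*α) with hM'def
  have hM'pos : 0 < M' := Real.rpow_pos_of_pos hMpos _
  -- continuity of integrands
  have hc1 : Continuous fun x => (deriv η x) ^ 4 / (η x) ^ (4 * α) :=
    (hgc.pow 4).div (crp (4*α)) (fun x => (Real.rpow_pos_of_pos (hpos x) _).ne')
  have hc2 : Continuous fun x => η x ^ p * ((deriv η x) ^ 2 * deriv (deriv η) x) :=
    (crp p).mul ((hgc.pow 2).mul hg'c)
  have hcu : Continuous fun x => η x ^ (-(2*α)) * (deriv η x) ^ 2 :=
    (crp (-(2*α))).mul (hgc.pow 2)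
  have hcB : Continuous fun x => η x ^ (-(2*α)) * (deriv η x) ^ 2 * |deriv (deriv η) x| :=
    hcu.mul hg'c.abs
  have ii : ∀ {f : ℝ → ℝ}, Continuous f → IntervalIntegrable f volume 0 L :=
    fun h => h.intervalIntegrable 0 L
  -- nonnegativity of the integrals
  have hI0 : 0 ≤ I := by
    refine intervalIntegral.integral_nonneg hL.le (fun x _ => ?_)
    exact div_nonneg (by positivity) (Real.rpow_pos_of_pos (hpos x) _).le
  have hJ0 : 0 ≤ J := intervalIntegral.integral_nonneg hL.le (fun x _ => sq_nonneg _)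
  have hB0 : 0 ≤ B := by
    refine intervalIntegral.integral_nonneg hL.le (fun x _ => ?_)
    have := (Real.rpow_pos_of_pos (hpos x) (-(2*α))).le
    positivity
  -- Step A : key identity p * I = -(3 * K)
  have key : ∀ x : ℝ, HasDerivAt (fun y => η y ^ p * (deriv η y) ^ 3)
      (p * ((deriv η x) ^ 4 / (η x) ^ (4 * α)) +
        3 * (η x ^ p * ((deriv η x) ^ 2 * deriv (deriv η) x))) x := by
    intro x
    have h1 : HasDerivAt (fun y => η y ^ p) (deriv η x * p * η x ^ (p - 1)) x :=
      ((hηd x).hasDerivAt).rpow_const (Or.inl (hηne x))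
    have h2 : HasDerivAt (fun y => (deriv η y) ^ 3)
        ((3:ℕ) * (deriv η x) ^ 2 * deriv (deriv η) x) x := by
      simpa using ((hgd x).hasDerivAt).fun_pow 3
    have h3 : HasDerivAt (fun y => η y ^ p * (deriv η y) ^ 3) _ x := h1.fun_mul h2
    convert h3 using 1
    have hrp : η x ^ (p - 1) = (η x ^ (4 * α))⁻¹ := by
      rw [show p - 1 = -(4*α) by rw [hpdef]; ring, Real.rpow_neg (hpos x).le]
    rw [hrp, div_eq_mul_inv]
    push_cast
    ring
  have hφc : Continuous fun x => p * ((deriv η x) ^ 4 / (η x) ^ (4 * α)) +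
      3 * (η x ^ p * ((deriv η x) ^ 2 * deriv (deriv η) x)) :=
    (continuous_const.mul hc1).add (continuous_const.mul hc2)
  have hηL : η L = η 0 := by simpa using hper 0
  have hgL : deriv η L = deriv η 0 := by
    have h := deriv_comp_add_const η L 0
    have heq : (fun x => η (x + L)) = η := funext fun x => hper x
    rw [heq] at h
    simpa using h.symm
  have hzero : (∫ x in (0:ℝ)..L, (p * ((deriv η x) ^ 4 / (η x) ^ (4 * α)) +
      3 * (η x ^ p * ((deriv η x) ^ 2 * deriv (deriv η) x)))) = 0 := by
    rw [intervalIntegral.integral_eq_sub_of_hasDerivAt (fun x _ => key x) (ii hφc)]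
    rw [hηL, hgL]
    ring
  have hsplit : (∫ x in (0:ℝ)..L, (p * ((deriv η x) ^ 4 / (η x) ^ (4 * α)) +
      3 * (η x ^ p * ((deriv η x) ^ 2 * deriv (deriv η) x)))) = p * I + 3 * K := by
    rw [intervalIntegral.integral_add (ii (continuous_const.fun_mul hc1))
      (ii (continuous_const.fun_mul hc2)), intervalIntegral.integral_const_mul,
      intervalIntegral.integral_const_mul]
  have hK : p * I = -(3 * K) := by
    have := hzero; rw [hsplit] at this; linarith
  -- Step B : |K| ≤ M' * B
  have hKbound : |K| ≤ M' * B := by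
    have h1 : |K| ≤ ∫ x in (0:ℝ)..L, |η x ^ p * ((deriv η x) ^ 2 * deriv (deriv η) x)| :=
      intervalIntegral.abs_integral_le_integral_abs hL.le
    have h2 : (∫ x in (0:ℝ)..L, |η x ^ p * ((deriv η x) ^ 2 * deriv (deriv η) x)|) ≤
        ∫ x in (0:ℝ)..L, M' * (η x ^ (-(2*α)) * (deriv η x) ^ 2 * |deriv (deriv η) x|) := by
      refine intervalIntegral.integral_mono_on hL.le (ii hc2.abs)
        (ii (continuous_const.mul hcB)) (fun x hx => ?_)
      have hps : η x ^ p = η x ^ (1 - 2*α) * η x ^ (-(2*α)) := by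
        rw [← Real.rpow_add (hpos x), hpdef]; ring_nf
      have hle : η x ^ (1 - 2*α) ≤ M' := by
        rw [hM'def]
        exact Real.rpow_le_rpow (hpos x).le (hMge x hx) (by linarith)
      have hnn : (0:ℝ) ≤ η x ^ (-(2*α)) * (deriv η x) ^ 2 * |deriv (deriv η) x| := by
        have := (Real.rpow_pos_of_pos (hpos x) (-(2*α))).le
        positivity
      calc |η x ^ p * ((deriv η x) ^ 2 * deriv (deriv η) x)|
          = η x ^ p * (deriv η x) ^ 2 * |deriv (deriv η) x| := by
            rw [abs_mul, abs_mul, abs_of_nonneg (Real.rpow_pos_of_pos (hpos x) p).le,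
              abs_of_nonneg (sq_nonneg _)]
            ring
        _ = η x ^ (1 - 2*α) * (η x ^ (-(2*α)) * (deriv η x) ^ 2 * |deriv (deriv η) x|) := by
            rw [hps]; ring
        _ ≤ M' * (η x ^ (-(2*α)) * (deriv η x) ^ 2 * |deriv (deriv η) x|) :=
            mul_le_mul_of_nonneg_right hle hnn
    have h3 : (∫ x in (0:ℝ)..L, M' * (η x ^ (-(2*α)) * (deriv η x) ^ 2 * |deriv (deriv η) x|))
        = M' * B := intervalIntegral.integral_const_mul _ _
    calc |K| ≤ _ := h1
      _ ≤ _ := h2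
      _ = M' * B := h3
  -- Step C : Cauchy–Schwarz : B ^ 2 ≤ J * I
  have hu2 : ∀ x, (η x ^ (-(2*α)) * (deriv η x) ^ 2) ^ 2
      = (deriv η x) ^ 4 / (η x) ^ (4 * α) := by
    intro x
    have h1 : (η x ^ (-(2*α))) ^ 2 = η x ^ (-(4*α)) := by
      rw [sq, ← Real.rpow_add (hpos x)]; ring_nf
    rw [mul_pow, h1, Real.rpow_neg (hpos x).le, div_eq_mul_inv]
    ring
  have quad : ∀ t : ℝ, 0 ≤ J * (t * t) + (-2 * B) * t + I := by
    intro t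
    have h0 : 0 ≤ ∫ x in (0:ℝ)..L,
        (t * |deriv (deriv η) x| - η x ^ (-(2*α)) * (deriv η x) ^ 2) ^ 2 :=
      intervalIntegral.integral_nonneg hL.le (fun x _ => sq_nonneg _)
    have hpt : ∀ x : ℝ, (t * |deriv (deriv η) x| - η x ^ (-(2*α)) * (deriv η x) ^ 2) ^ 2
        = (t * t) * (deriv (deriv η) x) ^ 2 +
          (-2 * t) * (η x ^ (-(2*α)) * (deriv η x) ^ 2 * |deriv (deriv η) x|) +
          (deriv η x) ^ 4 / (η x) ^ (4 * α) := by
      intro x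
      rw [sub_sq, mul_pow, sq_abs, ← hu2 x]
      ring
    have hexp : (∫ x in (0:ℝ)..L,
        (t * |deriv (deriv η) x| - η x ^ (-(2*α)) * (deriv η x) ^ 2) ^ 2)
        = (t * t) * J + (-2 * t) * B + I := by
      simp only [hpt]
      rw [intervalIntegral.integral_add (((ii (continuous_const.fun_mul (hg'c.fun_pow 2)))).add
          (ii (continuous_const.fun_mul hcB))) (ii hc1),
        intervalIntegral.integral_add (ii (continuous_const.fun_mul (hg'c.fun_pow 2)))
          (ii (continuous_const.fun_mul hcB)),
        intervalIntegral.integral_const_mul, intervalIntegral.integral_const_mul]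
    rw [hexp] at h0
    linarith
  have hB2 : B ^ 2 ≤ J * I := by
    have hd := discrim_le_zero quad
    rw [discrim] at hd
    nlinarith [hd]
  -- Step D : combine
  have hPI : |p| * I ≤ 3 * (M' * B) := by
    have habs : |p| * I = 3 * |K| := by
      rw [← abs_of_nonneg hI0, ← abs_mul, hK, abs_neg, abs_mul]
      norm_num
    rw [habs]
    have := hKbound
    linarith
  have hM2 : M ^ (2 * (1 - 2 * α)) = M' * M' := by
    rw [hM'def, ← Real.rpow_add hMpos]; ring_nf
  rw [hM2]
  rcases hI0.eq_or_lt with hI | hI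
  · rw [← hI]
    have : (0:ℝ) ≤ 9 / p ^ 2 * J * (M' * M') :=
      mul_nonneg (mul_nonneg (by positivity) hJ0) (by positivity)
    linarith
  · have h1 : p ^ 2 * I ^ 2 ≤ 9 * (M' * M') * (J * I) := by
      have hsq : (|p| * I) ^ 2 ≤ (3 * (M' * B)) ^ 2 :=
        pow_le_pow_left₀ (mul_nonneg (abs_nonneg _) hI0) hPI 2
      calc p ^ 2 * I ^ 2 = (|p| * I) ^ 2 := by rw [mul_pow, sq_abs]
        _ ≤ (3 * (M' * B)) ^ 2 := hsq
        _ = 9 * (M' * M') * B ^ 2 := by ring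
        _ ≤ 9 * (M' * M') * (J * I) := by nlinarith [hB2, hM'pos.le]
    rw [div_mul_eq_mul_div, div_mul_eq_mul_div, le_div_iff₀ hp2]
    have h2 : I * p ^ 2 * I ≤ 9 * J * (M' * M') * I := by
      calc I * p ^ 2 * I = p ^ 2 * I ^ 2 := by ring
        _ ≤ 9 * (M' * M') * (J * I) := h1
        _ = 9 * J * (M' * M') * I := by ring
    exact le_of_mul_le_mul_right h2 hI
end

section
/- Let z : ℝ → ℝ be a C² L-periodic function. Then for every x ∈ ℝ, |z'(x)| ≤ (sup_{y ∈ [0,L]} |z'(y)² + z(y) z''(y)|)^{1/2}. -/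
/-!
By periodicity, `z'` attains its maximum and its minimum over `ℝ` at points `a, b ∈ [0, L]`.
There `z''` vanishes, so `z'(a)² = |z'(a)² + z(a) z''(a)|` is bounded by the supremum, and
likewise at `b`; every value `z'(x)` lies between `z'(b)` and `z'(a)`.
-/

open Set

namespace Function.Periodic

variable {α : Type*} {f : ℝ → α} {c : ℝ}

theorem deriv {g : ℝ → ℝ} (hg : Periodic g c) : Periodic (deriv g) c := fun x => by
  rw [← deriv_comp_add_const, funext hg]

theorem image_Icc_eq_range (hp : Periodic f c) (hc : 0 < c) : f '' Icc 0 c = range f := by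
  simpa [uIcc_of_le hc.le] using hp.image_uIcc hc.ne' 0

theorem exists_mem_Icc_forall_le [LinearOrder α] [TopologicalSpace α] [ClosedIciTopology α]
    (hp : Periodic f c) (hc : 0 < c) (hf : Continuous f) :
    ∃ a ∈ Icc 0 c, ∀ x, f x ≤ f a := by
  obtain ⟨a, ha, hmax⟩ :=
    isCompact_Icc.exists_isMaxOn (nonempty_Icc.mpr hc.le) hf.continuousOn
  refine ⟨a, ha, fun x => ?_⟩
  obtain ⟨y, hy, hyx⟩ : f x ∈ f '' Icc 0 c := hp.image_Icc_eq_range hc ▸ mem_range_self x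
  exact hyx ▸ hmax hy

theorem exists_mem_Icc_forall_ge [LinearOrder α] [TopologicalSpace α] [ClosedIicTopology α]
    (hp : Periodic f c) (hc : 0 < c) (hf : Continuous f) :
    ∃ b ∈ Icc 0 c, ∀ x, f b ≤ f x := by
  obtain ⟨b, hb, hmin⟩ :=
    isCompact_Icc.exists_isMinOn (nonempty_Icc.mpr hc.le) hf.continuousOn
  refine ⟨b, hb, fun x => ?_⟩
  obtain ⟨y, hy, hyx⟩ : f x ∈ f '' Icc 0 c := hp.image_Icc_eq_range hc ▸ mem_range_self x
  exact hyx ▸ hmin hy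

end Function.Periodic

theorem stmt2 (L : ℝ) (hL : 0 < L) (z : ℝ → ℝ) (hz : ContDiff ℝ 2 z)
    (hper : Function.Periodic z L) (x : ℝ) :
    |deriv z x| ≤
      Real.sqrt (sSup ((fun y => |(deriv z y) ^ 2 + z y * deriv (deriv z) y|) '' Set.Icc 0 L)) := by
  set F : ℝ → ℝ := fun y => |(deriv z y) ^ 2 + z y * deriv (deriv z) y|
  have hz' : Continuous (deriv z) := hz.continuous_deriv one_le_two
  have hz'' : Continuous (deriv (deriv z)) := (hz.deriv' (n := 1)).continuous_deriv le_rfl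
  have hF : BddAbove (F '' Icc 0 L) :=
    (isCompact_Icc.image (by fun_prop : Continuous F)).bddAbove
  have at_critical :
      ∀ c ∈ Icc 0 L, deriv (deriv z) c = 0 → |deriv z c| ≤ √(sSup (F '' Icc 0 L)) :=
    fun c hc hcrit => Real.abs_le_sqrt <| by
      simpa [F, hcrit] using le_csSup hF (mem_image_of_mem F hc)
  obtain ⟨a, ha, hmax⟩ := hper.deriv.exists_mem_Icc_forall_le hL hz'
  obtain ⟨b, hb, hmin⟩ := hper.deriv.exists_mem_Icc_forall_ge hL hz'
  have hza := at_critical a ha (IsLocalMax.deriv_eq_zero (.of_forall hmax))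
  have hzb := at_critical b hb (IsLocalMin.deriv_eq_zero (.of_forall hmin))
  exact (abs_le_max_abs_abs (hmin x) (hmax x)).trans (max_le hzb hza)
end

section
/- For every L > 0 there exists a continuous function D : (0,∞) × [0,∞) → (0,∞) such that for every smooth L-periodic strictly positive function η, sup_{x∈[0,L]} 1/η(x) ≤ D(∫₀ᴸ 1/η(x) dx, ‖η‖_{H²(0,L)}). In particular, if a family of such functions η has ∫₀ᴸ 1/η dx and ‖η‖_{H²(0,L)} uniformly bounded, then inf η is uniformly bounded away from zero. -/
open MeasureTheory intervalIntegral

set_option maxHeartbeats 2000000 in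
theorem stmt6 (L : ℝ) (hL : 0 < L) :
    ∃ D : ℝ × ℝ → ℝ,
      ContinuousOn D (Set.Ioi 0 ×ˢ Set.Ici 0) ∧
      (∀ p ∈ (Set.Ioi (0:ℝ)) ×ˢ (Set.Ici (0:ℝ)), 0 < D p) ∧
      ∀ η : ℝ → ℝ, ContDiff ℝ (⊤ : ℕ∞) η → Function.Periodic η L → (∀ x, 0 < η x) →
        sSup ((fun x => 1 / η x) '' Set.Icc 0 L) ≤
          D (∫ x in (0:ℝ)..L, 1 / η x,
             Real.sqrt (∫ x in (0:ℝ)..L,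
               (η x) ^ 2 + (deriv η x) ^ 2 + (deriv (deriv η) x) ^ 2)) := by
  refine ⟨fun p => 2 * p.1 * (1 / L + 1 + 4 * p.2 ^ 2 * p.1 ^ 2), ?_, ?_, ?_⟩
  · exact (by fun_prop : Continuous fun p : ℝ × ℝ =>
      2 * p.1 * (1 / L + 1 + 4 * p.2 ^ 2 * p.1 ^ 2)).continuousOn
  · rintro ⟨I, N⟩ ⟨hI, -⟩
    simp only [Set.mem_Ioi] at hI
    have h1 : (0:ℝ) < 1 / L + 1 + 4 * N ^ 2 * I ^ 2 := by positivity
    exact mul_pos (by linarith) h1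
  · intro η hsm hper hpos
    have hc : Continuous η := hsm.continuous
    have hsm' : ContDiff ℝ ((⊤:ℕ∞) : WithTop ℕ∞) η := hsm.of_le (by simp)
    have hdiff : Differentiable ℝ η := hsm'.differentiable (by simp)
    have hd' : ContDiff ℝ ((⊤:ℕ∞) : WithTop ℕ∞) (deriv η) := (contDiff_infty_iff_deriv.mp hsm').2
    have hdiff' : Differentiable ℝ (deriv η) := hd'.differentiable (by simp)
    have hc' : Continuous (deriv η) := hd'.continuous
    have hc'' : Continuous (deriv (deriv η)) := (contDiff_infty_iff_deriv.mp hd').2.continuous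
    set I := ∫ x in (0:ℝ)..L, 1 / η x with hIdef
    set Nsq := ∫ x in (0:ℝ)..L, (η x) ^ 2 + (deriv η x) ^ 2 + (deriv (deriv η) x) ^ 2 with hNsqdef
    set N := Real.sqrt Nsq with hNdef
    show sSup ((fun x => 1 / η x) '' Set.Icc 0 L) ≤ 2 * I * (1 / L + 1 + 4 * N ^ 2 * I ^ 2)
    -- periodicity of derivatives
    have hper' : Function.Periodic (deriv η) L := by
      intro x
      have h : η = fun y => η (y + L) := funext fun y => (hper y).symm
      conv_rhs => rw [h]
      rw [deriv_comp_add_const]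
    have hper'' : Function.Periodic (deriv (deriv η)) L := by
      intro x
      have h : deriv η = fun y => deriv η (y + L) := funext fun y => (hper' y).symm
      conv_rhs => rw [h]
      rw [deriv_comp_add_const]
    have hper2 : Function.Periodic (fun x => deriv (deriv η) x ^ 2) L := fun x => by
      simp [hper'' x]
    have hperinv : Function.Periodic (fun x => 1 / η x) L := fun x => by simp [hper x]
    -- minimum
    obtain ⟨x₀, hx₀, hmin⟩ :=
      isCompact_Icc.exists_isMinOn (Set.nonempty_Icc.mpr hL.le) hc.continuousOn
    set m := η x₀ with hmdef
    have hm : 0 < m := hpos x₀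
    have hglob : ∀ t, m ≤ η t := by
      intro t
      have h1 : η (t - ⌊t / L⌋ * L) = η t := hper.sub_int_mul_eq ⌊t / L⌋
      rw [← h1]
      exact hmin ⟨Int.sub_floor_div_mul_nonneg t hL, (Int.sub_floor_div_mul_lt t hL).le⟩
    have hder0 : deriv η x₀ = 0 := by
      have hloc : IsLocalMin η x₀ := Filter.Eventually.of_forall fun y => hglob y
      exact hloc.deriv_eq_zero
    -- positivity of I, Nsq
    have hcinv : Continuous fun x => 1 / η x := continuous_const.div hc fun x => (hpos x).ne'
    have hI : 0 < I := intervalIntegral_pos_of_pos (hcinv.intervalIntegrable 0 L)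
      (fun x => by have := hpos x; positivity) hL
    have hcsum : Continuous fun x => (η x) ^ 2 + (deriv η x) ^ 2 + (deriv (deriv η) x) ^ 2 := by
      fun_prop
    have hNsqpos : 0 < Nsq := intervalIntegral_pos_of_pos (hcsum.intervalIntegrable 0 L)
      (fun x => by
        have h1 : 0 < (η x) ^ 2 := pow_pos (hpos x) 2
        nlinarith [sq_nonneg (deriv η x), sq_nonneg (deriv (deriv η) x)]) hL
    have hNpos : 0 < N := Real.sqrt_pos.mpr hNsqpos
    have hNsq_eq : N ^ 2 = Nsq := Real.sq_sqrt hNsqpos.le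
    have h2 : (∫ x in (0:ℝ)..L, deriv (deriv η) x ^ 2) ≤ N ^ 2 := by
      rw [hNsq_eq, hNsqdef]
      apply integral_mono_on hL.le ((hc''.pow 2).intervalIntegrable _ _)
        (hcsum.intervalIntegrable _ _)
      intro x _
      show deriv (deriv η) x ^ 2 ≤ (η x) ^ 2 + (deriv η x) ^ 2 + (deriv (deriv η) x) ^ 2
      nlinarith [sq_nonneg (η x), sq_nonneg (deriv η x)]
    -- delta
    set δ := min L (1 / (1 + 4 * N ^ 2 * I ^ 2)) with hδdef
    have hδpos : 0 < δ := lt_min hL (by positivity)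
    have hδL : δ ≤ L := min_le_left _ _
    set sδ := Real.sqrt δ with hsδdef
    have hsδpos : 0 < sδ := Real.sqrt_pos.mpr hδpos
    have hsδsq : sδ ^ 2 = δ := Real.sq_sqrt hδpos.le
    set t := sδ / N with htdef
    have ht : 0 < t := div_pos hsδpos hNpos
    -- shifted integrals
    have hshift2 : (∫ x in x₀..x₀ + L, deriv (deriv η) x ^ 2)
        = ∫ x in (0:ℝ)..L, deriv (deriv η) x ^ 2 := by
      have h := hper2.intervalIntegral_add_eq x₀ 0
      simpa using h
    -- step A : bound on deriv η on [x₀, x₀ + δ]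
    have hstepA : ∀ s ∈ Set.Icc x₀ (x₀ + δ), deriv η s ≤ N * sδ := by
      rintro s ⟨hs1, hs2⟩
      have heq : deriv η s = ∫ u in x₀..s, deriv (deriv η) u := by
        rw [integral_deriv_eq_sub (fun x _ => hdiff' x) (hc''.intervalIntegrable _ _), hder0,
          sub_zero]
      have hb3 : (∫ u in x₀..s, deriv (deriv η) u ^ 2) ≤ N ^ 2 := by
        calc (∫ u in x₀..s, deriv (deriv η) u ^ 2)
            ≤ ∫ u in x₀..x₀ + L, deriv (deriv η) u ^ 2 :=
              integral_mono_interval le_rfl hs1 (by linarith)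
                (Filter.Eventually.of_forall fun u => sq_nonneg _)
                ((hc''.pow 2).intervalIntegrable _ _)
          _ ≤ N ^ 2 := by rw [hshift2]; exact h2
      have hb1 : (∫ u in x₀..s, deriv (deriv η) u)
          ≤ ∫ u in x₀..s, (t * deriv (deriv η) u ^ 2 + 1 / t) / 2 := by
        apply integral_mono_on hs1 (hc''.intervalIntegrable _ _)
          (((continuous_const.mul (hc''.pow 2)).add continuous_const).div_const 2
            |>.intervalIntegrable _ _)
        intro u _
        have hsq := sq_nonneg (t * deriv (deriv η) u - 1)
        have h1t : t * (1 / t) = 1 := mul_one_div_cancel ht.ne'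
        show deriv (deriv η) u ≤ (t * deriv (deriv η) u ^ 2 + 1 / t) / 2
        nlinarith [ht, mul_pos ht ht]
      have hb2 : (∫ u in x₀..s, (t * deriv (deriv η) u ^ 2 + 1 / t) / 2)
          = ((t * ∫ u in x₀..s, deriv (deriv η) u ^ 2) + (s - x₀) * (1 / t)) / 2 := by
        rw [intervalIntegral.integral_div,
          intervalIntegral.integral_add (f := fun u => t * deriv (deriv η) u ^ 2)
            ((continuous_const.mul (hc''.pow 2)).intervalIntegrable _ _)
            intervalIntegrable_const,
          intervalIntegral.integral_const_mul, intervalIntegral.integral_const, smul_eq_mul]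
      have h1t : 1 / t = N / sδ := by rw [htdef, one_div_div]
      have hfin : ((t * ∫ u in x₀..s, deriv (deriv η) u ^ 2) + (s - x₀) * (1 / t)) / 2
          ≤ N * sδ := by
        have e2 : t * N ^ 2 = sδ * N := by
          rw [htdef]; field_simp [hNpos.ne']
        have h3 : t * (∫ u in x₀..s, deriv (deriv η) u ^ 2) ≤ sδ * N := by
          calc t * (∫ u in x₀..s, deriv (deriv η) u ^ 2) ≤ t * N ^ 2 :=
                mul_le_mul_of_nonneg_left hb3 ht.le
            _ = sδ * N := e2
        have h4 : (s - x₀) * (1 / t) ≤ sδ * N := by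
          rw [h1t]
          have h5 : (s - x₀) * (N / sδ) ≤ δ * (N / sδ) := by
            apply mul_le_mul_of_nonneg_right (by linarith) (by positivity)
          have h6 : δ * (N / sδ) = sδ * N := by
            rw [← hsδsq]; field_simp [hNpos.ne']
          linarith
        linarith
      calc deriv η s = ∫ u in x₀..s, deriv (deriv η) u := heq
        _ ≤ _ := hb1
        _ = _ := hb2
        _ ≤ N * sδ := hfin
    -- step B : bound on η on [x₀, x₀ + δ]
    have hstepB : ∀ x ∈ Set.Icc x₀ (x₀ + δ), η x ≤ m + N * sδ * δ := by
      rintro x ⟨hx1, hx2⟩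
      have heq : (∫ u in x₀..x, deriv η u) = η x - m :=
        integral_deriv_eq_sub (fun y _ => hdiff y) (hc'.intervalIntegrable _ _)
      have hb : (∫ u in x₀..x, deriv η u) ≤ ∫ u in x₀..x, (fun _ => N * sδ) u :=
        integral_mono_on hx1 (hc'.intervalIntegrable _ _) intervalIntegrable_const
          (fun u hu => hstepA u ⟨hu.1, le_trans hu.2 hx2⟩)
      rw [heq, intervalIntegral.integral_const, smul_eq_mul] at hb
      have hNs : 0 ≤ N * sδ := by positivity
      nlinarith [hb, hx2, hx1]
    -- step C : lower bound for I
    set K := N * sδ * δ with hKdef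
    have hKnn : 0 ≤ K := by positivity
    have hmK : 0 < m + K := by linarith
    have hshiftinv : (∫ x in x₀..x₀ + L, 1 / η x) = I := by
      rw [hIdef]
      have h := hperinv.intervalIntegral_add_eq x₀ 0
      rw [zero_add] at h
      exact h
    have hc1 : δ * (1 / (m + K)) ≤ I := by
      have h1 : (∫ x in x₀..x₀ + δ, 1 / η x) ≤ ∫ x in x₀..x₀ + L, 1 / η x :=
        integral_mono_interval le_rfl (by linarith) (by linarith)
          (Filter.Eventually.of_forall fun u => by have := hpos u; positivity)
          (hcinv.intervalIntegrable _ _)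
      have h2' : (∫ x in x₀..x₀ + δ, (fun _ => 1 / (m + K)) x) ≤ ∫ x in x₀..x₀ + δ, 1 / η x := by
        apply integral_mono_on (by linarith) intervalIntegrable_const
          (hcinv.intervalIntegrable _ _)
        intro x hx
        exact one_div_le_one_div_of_le (hpos x) (hstepB x hx)
      rw [intervalIntegral.integral_const, smul_eq_mul, add_sub_cancel_left] at h2'
      linarith [hshiftinv ▸ h1]
    -- step D : lower bound for m
    have hKle : K ≤ δ / (2 * I) := by
      have h1 : N * sδ ≤ 1 / (2 * I) := by
        have e1 : N * sδ = Real.sqrt (N ^ 2 * δ) := by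
          rw [Real.sqrt_mul (sq_nonneg N), Real.sqrt_sq hNpos.le]
        have e2 : (1:ℝ) / (2 * I) = Real.sqrt ((1 / (2 * I)) ^ 2) :=
          (Real.sqrt_sq (by positivity)).symm
        rw [e1, e2]
        apply Real.sqrt_le_sqrt
        have hδ2 : δ ≤ 1 / (1 + 4 * N ^ 2 * I ^ 2) := min_le_right _ _
        have h3 : N ^ 2 * δ ≤ N ^ 2 * (1 / (1 + 4 * N ^ 2 * I ^ 2)) :=
          mul_le_mul_of_nonneg_left hδ2 (sq_nonneg N)
        have h4 : N ^ 2 * (1 / (1 + 4 * N ^ 2 * I ^ 2)) ≤ (1 / (2 * I)) ^ 2 := by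
          rw [mul_one_div, div_le_iff₀ (by positivity)]
          have e3 : (1 / (2 * I)) ^ 2 * (1 + 4 * N ^ 2 * I ^ 2)
              = 1 / (4 * I ^ 2) + N ^ 2 := by
            field_simp
            ring
          rw [e3]
          have h4I : (0:ℝ) < 1 / (4 * I ^ 2) :=
            one_div_pos.mpr (mul_pos (by norm_num) (pow_pos hI 2))
          linarith
        linarith
      calc K = (N * sδ) * δ := by rw [hKdef]
        _ ≤ (1 / (2 * I)) * δ := mul_le_mul_of_nonneg_right h1 hδpos.le
        _ = δ / (2 * I) := by ring
    have hmlb : δ / (2 * I) ≤ m := by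
      have h5 : δ ≤ I * (m + K) := by
        rw [mul_one_div] at hc1
        exact (div_le_iff₀ hmK).mp hc1
      have h6 : I * K ≤ δ / 2 := by
        calc I * K ≤ I * (δ / (2 * I)) := mul_le_mul_of_nonneg_left hKle hI.le
          _ = δ / 2 := by field_simp [hI.ne']
      have h7 : I * (m + K) = I * m + I * K := by ring
      have h8' : δ / 2 ≤ I * m := by linarith
      rw [div_le_iff₀ (by linarith : (0:ℝ) < 2 * I)]
      linarith
    -- final
    apply csSup_le ((Set.nonempty_Icc.mpr hL.le).image _)
    rintro y ⟨x, hx, rfl⟩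
    have h8 : 1 / η x ≤ 1 / m := one_div_le_one_div_of_le hm (hmin hx)
    have h9 : 1 / m ≤ 2 * I / δ := by
      rw [div_le_div_iff₀ hm hδpos]
      rw [div_le_iff₀ (by positivity : (0:ℝ) < 2 * I)] at hmlb
      linarith
    have h11 : 1 / δ ≤ 1 / L + 1 + 4 * N ^ 2 * I ^ 2 := by
      rcases min_cases L (1 / (1 + 4 * N ^ 2 * I ^ 2)) with ⟨he, _⟩ | ⟨he, _⟩
      · rw [hδdef, he]
        have : (0:ℝ) ≤ 4 * N ^ 2 * I ^ 2 := mul_nonneg (mul_nonneg (by norm_num) (sq_nonneg N)) (sq_nonneg I)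
        linarith
      · rw [hδdef, he, one_div_one_div]
        have : (0:ℝ) ≤ 1 / L := by positivity
        linarith
    have h10 : 2 * I / δ ≤ 2 * I * (1 / L + 1 + 4 * N ^ 2 * I ^ 2) := by
      calc 2 * I / δ = 2 * I * (1 / δ) := by ring
        _ ≤ 2 * I * (1 / L + 1 + 4 * N ^ 2 * I ^ 2) :=
            mul_le_mul_of_nonneg_left h11 (by linarith)
    simp only
    linarith
end

section
/- Let η be a smooth L-periodic function with η > 0, attaining its minimum η_m at x₀, and set M = ‖η‖_{H²(0,L)}/3 with M > 0. Then ∫₀ᴸ (1/η(s)) ds ≥ (1/(M^{2/3} η_m^{1/3})) φ((M/η_m)^{2/3}), where φ(σ) = ∫₀^{Lσ} dz/(1 + z^{3/2}). -/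
open MeasureTheory intervalIntegral

lemma cs_int {f : ℝ → ℝ} (hf : Continuous f) {a b : ℝ} (hab : a ≤ b) :
    (∫ x in a..b, f x)^2 ≤ (b - a) * ∫ x in a..b, (f x)^2 := by
  set A := ∫ x in a..b, f x with hA
  set S := ∫ x in a..b, (f x)^2 with hS
  have h1 : IntervalIntegrable f volume a b := hf.intervalIntegrable _ _
  have h2 : IntervalIntegrable (fun x => (f x)^2) volume a b := (hf.pow 2).intervalIntegrable _ _
  have h0 : 0 ≤ ∫ x in a..b, ((b-a) * f x - A)^2 :=
    intervalIntegral.integral_nonneg hab (fun x _ => sq_nonneg _)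
  have hexp : ∫ x in a..b, ((b-a) * f x - A)^2
      = (b-a)^2 * S - (2*(b-a)*A) * A + A^2 * (b-a) := by
    have e : (fun x => ((b-a) * f x - A)^2)
        = fun x => (b-a)^2 * (f x)^2 - (2*(b-a)*A) * f x + A^2 := by
      funext x; ring
    rw [e, intervalIntegral.integral_add (((h2.const_mul _).sub (h1.const_mul _)))
      intervalIntegrable_const,
      intervalIntegral.integral_sub (h2.const_mul _) (h1.const_mul _),
      intervalIntegral.integral_const_mul, intervalIntegral.integral_const_mul,
      intervalIntegral.integral_const]
    rw [← hA, ← hS]; simp [smul_eq_mul]; ring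
  rcases eq_or_lt_of_le hab with rfl | hlt
  · simp [hA]
  · have hT : 0 ≤ (b-a) * ((b-a)*S - A^2) := by nlinarith [h0, hexp]
    have := (mul_nonneg_iff_of_pos_left (by linarith : 0 < b - a)).mp hT
    linarith

lemma even_int (h : ℝ → ℝ) (heven : ∀ x, h (-x) = h x) (hcont : Continuous h) (c : ℝ) :
    ∫ x in (-c)..c, h x = 2 * ∫ x in (0:ℝ)..c, h x := by
  have hint : ∀ u v : ℝ, IntervalIntegrable h volume u v := fun u v =>
    hcont.intervalIntegrable _ _
  have h1 : ∫ x in (-c)..(0:ℝ), h x = ∫ x in (0:ℝ)..c, h x := by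
    have := intervalIntegral.integral_comp_neg (a := (0:ℝ)) (b := c) h
    simp only [heven, neg_zero] at this
    rw [← this]
  rw [← intervalIntegral.integral_add_adjacent_intervals (a := -c) (b := 0) (c := c)
    (hint _ _) (hint _ _), h1]
  ring

set_option maxHeartbeats 1000000 in
theorem stmt7 (L : ℝ) (hL : 0 < L) (η : ℝ → ℝ) (hη : ContDiff ℝ (⊤ : ℕ∞) η)
    (hper : Function.Periodic η L) (hpos : ∀ x, 0 < η x)
    (x₀ : ℝ) (hmin : ∀ x, η x₀ ≤ η x) (M : ℝ)
    (hM : M = Real.sqrt (∫ x in (0:ℝ)..L,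
        (η x) ^ 2 + (deriv η x) ^ 2 + (deriv (deriv η) x) ^ 2) / 3)
    (hMpos : 0 < M) :
    (1 / (M ^ ((2:ℝ)/3) * (η x₀) ^ ((1:ℝ)/3))) *
        (∫ z in (0:ℝ)..(L * (M / η x₀) ^ ((2:ℝ)/3)), 1 / (1 + |z| ^ ((3:ℝ)/2)))
      ≤ ∫ s in (0:ℝ)..L, 1 / η s := by
  have hη' : ContDiff ℝ (⊤ : ℕ∞) η := hη.of_le (by simp)
  have hd : Differentiable ℝ η := (contDiff_infty_iff_deriv.mp hη').1
  have h2 : ContDiff ℝ (⊤ : ℕ∞) (deriv η) := (contDiff_infty_iff_deriv.mp hη').2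
  have hd2 : Differentiable ℝ (deriv η) := (contDiff_infty_iff_deriv.mp h2).1
  have hc2 : Continuous (deriv (deriv η)) := ((contDiff_infty_iff_deriv.mp h2).2).continuous
  have hc1 : Continuous (deriv η) := hd2.continuous
  have hc0 : Continuous η := hd.continuous
  -- periodicity of derivatives
  have hperD : Function.Periodic (deriv η) L := by
    intro x
    have h1 : (fun y => η (y + L)) = η := funext fun y => hper y
    calc deriv η (x + L) = deriv (fun y => η (y + L)) x := (deriv_comp_add_const η L x).symm
      _ = deriv η x := by rw [h1]
  have hperD2 : Function.Periodic (deriv (deriv η)) L := by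
    intro x
    have h1 : (fun y => deriv η (y + L)) = deriv η := funext fun y => hperD y
    calc deriv (deriv η) (x + L) = deriv (fun y => deriv η (y + L)) x :=
        (deriv_comp_add_const (deriv η) L x).symm
      _ = deriv (deriv η) x := by rw [h1]
  have hd0 : deriv η x₀ = 0 := by
    have : IsLocalMin η x₀ := Filter.Eventually.of_forall (fun x => hmin x)
    exact this.deriv_eq_zero
  -- the H² bound
  set I := ∫ x in (0:ℝ)..L, (η x) ^ 2 + (deriv η x) ^ 2 + (deriv (deriv η) x) ^ 2 with hI
  have hInonneg : 0 ≤ I := intervalIntegral.integral_nonneg hL.le (fun x _ => by positivity)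
  have hIsqrt : Real.sqrt I = 3 * M := by rw [hM]; ring
  have hIval : I = 9 * M ^ 2 := by nlinarith [Real.sq_sqrt hInonneg, hIsqrt]
  have hi0 : IntervalIntegrable (fun x => (deriv (deriv η) x)^2) volume (0:ℝ) L :=
    (hc2.pow 2).intervalIntegrable _ _
  have hi1 : IntervalIntegrable (fun x => (η x) ^ 2 + (deriv η x) ^ 2 + (deriv (deriv η) x) ^ 2)
      volume (0:ℝ) L := (((hc0.pow 2).add (hc1.pow 2)).add (hc2.pow 2)).intervalIntegrable _ _
  have hD2L2 : ∫ x in (0:ℝ)..L, (deriv (deriv η) x)^2 ≤ 9 * M ^ 2 := by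
    rw [← hIval, hI]
    exact intervalIntegral.integral_mono_on hL.le hi0 hi1
      (fun x _ => by nlinarith [sq_nonneg (η x), sq_nonneg (deriv η x)])
  -- periodicity of (η'')²
  have hperD2sq : Function.Periodic (fun x => (deriv (deriv η) x)^2) L := by
    intro x; simp [hperD2 x]
  have hwinD2 : ∫ x in (x₀ - L/2)..(x₀ + L/2), (deriv (deriv η) x)^2 ≤ 9 * M ^ 2 := by
    have := hperD2sq.intervalIntegral_add_eq (x₀ - L/2) 0
    rw [show x₀ - L/2 + L = x₀ + L/2 by ring, zero_add] at this
    rw [this]; exact hD2L2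
  -- Cauchy-Schwarz bound
  have key : ∀ a b : ℝ, x₀ - L/2 ≤ a → a ≤ b → b ≤ x₀ + L/2 →
      |∫ x in a..b, deriv (deriv η) x| ≤ 3 * M * Real.sqrt (b - a) := by
    intro a b ha hab hb
    have hsub : ∫ x in a..b, (deriv (deriv η) x)^2 ≤ 9 * M ^ 2 := by
      refine le_trans (intervalIntegral.integral_mono_interval ha hab hb
        (Filter.Eventually.of_forall (fun x => sq_nonneg _))
        (((hc2.pow 2)).intervalIntegrable _ _)) hwinD2
    have hcs := cs_int hc2 hab
    have hsq : (∫ x in a..b, deriv (deriv η) x)^2 ≤ (3 * M * Real.sqrt (b - a))^2 := by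
      have h5 : (Real.sqrt (b - a))^2 = b - a := Real.sq_sqrt (by linarith)
      nlinarith [hcs, hsub, Real.sqrt_nonneg (b - a), sub_nonneg.mpr hab]
    calc |∫ x in a..b, deriv (deriv η) x| = Real.sqrt ((∫ x in a..b, deriv (deriv η) x)^2) :=
          (Real.sqrt_sq_eq_abs _).symm
      _ ≤ Real.sqrt ((3 * M * Real.sqrt (b - a))^2) := Real.sqrt_le_sqrt hsq
      _ = 3 * M * Real.sqrt (b - a) := Real.sqrt_sq (by positivity)
  -- bound on η'
  have hderiv_bound : ∀ t, x₀ - L/2 ≤ t → t ≤ x₀ + L/2 →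
      |deriv η t| ≤ 3 * M * Real.sqrt |t - x₀| := by
    intro t ht1 ht2
    rcases le_total x₀ t with hx | hx
    · have hftc : ∫ x in x₀..t, deriv (deriv η) x = deriv η t - deriv η x₀ :=
        intervalIntegral.integral_deriv_eq_sub (fun x _ => (hd2 x))
          (hc2.intervalIntegrable _ _)
      rw [hd0, sub_zero] at hftc
      have := key x₀ t (by linarith) hx ht2
      rw [hftc] at this
      rw [abs_of_nonneg (by linarith : (0:ℝ) ≤ t - x₀)]
      exact this
    · have hftc : ∫ x in t..x₀, deriv (deriv η) x = deriv η x₀ - deriv η t :=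
        intervalIntegral.integral_deriv_eq_sub (fun x _ => (hd2 x))
          (hc2.intervalIntegrable _ _)
      rw [hd0, zero_sub] at hftc
      have := key t x₀ ht1 hx (by linarith)
      rw [hftc, abs_neg] at this
      rw [abs_of_nonpos (by linarith : t - x₀ ≤ 0)]
      simpa [neg_sub] using this
  -- integral of sqrt
  have hsqrt_int : ∀ c : ℝ, 0 ≤ c →
      ∫ t in (0:ℝ)..c, Real.sqrt t = 2/3 * c ^ ((3:ℝ)/2) := by
    intro c hc
    have e : (fun t : ℝ => Real.sqrt t) = fun t : ℝ => t ^ ((1:ℝ)/2) := by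
      funext t; exact Real.sqrt_eq_rpow t
    rw [e, integral_rpow (Or.inl (by norm_num))]
    rw [Real.zero_rpow (by norm_num : (1:ℝ)/2 + 1 ≠ 0)]
    rw [show (1:ℝ)/2 + 1 = (3:ℝ)/2 by norm_num]
    ring
  -- bound on η
  have hsqc : Continuous (fun x : ℝ => 3 * M * Real.sqrt (x - x₀)) := by
    exact (continuous_const.mul ((continuous_id.sub continuous_const).sqrt))
  have hsqc' : Continuous (fun x : ℝ => -(3 * M * Real.sqrt (x₀ - x))) := by
    exact (continuous_const.mul ((continuous_const.sub continuous_id).sqrt)).neg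
  have hηbound : ∀ s, x₀ - L/2 ≤ s → s ≤ x₀ + L/2 →
      η s ≤ η x₀ + 2 * M * |s - x₀| ^ ((3:ℝ)/2) := by
    intro s hs1 hs2
    rcases le_total x₀ s with hx | hx
    · have hftc : ∫ x in x₀..s, deriv η x = η s - η x₀ :=
        intervalIntegral.integral_deriv_eq_sub (fun x _ => hd x) (hc1.intervalIntegrable _ _)
      have hmono : ∫ x in x₀..s, deriv η x ≤ ∫ x in x₀..s, 3 * M * Real.sqrt (x - x₀) := by
        refine intervalIntegral.integral_mono_on hx (hc1.intervalIntegrable _ _)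
          (hsqc.intervalIntegrable _ _) (fun x hx' => ?_)
        have hb := hderiv_bound x (by linarith [hx'.1]) (by linarith [hx'.2])
        rw [abs_of_nonneg (by linarith [hx'.1] : (0:ℝ) ≤ x - x₀)] at hb
        exact (le_abs_self _).trans hb
      have hcomp : ∫ x in x₀..s, 3 * M * Real.sqrt (x - x₀)
          = 2 * M * (s - x₀) ^ ((3:ℝ)/2) := by
        rw [intervalIntegral.integral_const_mul]
        have := intervalIntegral.integral_comp_sub_right (a := x₀) (b := s)
          (fun u => Real.sqrt u) x₀
        rw [this, sub_self]
        rw [hsqrt_int (s - x₀) (by linarith)]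
        ring
      rw [abs_of_nonneg (by linarith : (0:ℝ) ≤ s - x₀)]
      rw [hftc] at hmono; rw [hcomp] at hmono; linarith
    · have hftc : ∫ x in s..x₀, deriv η x = η x₀ - η s :=
        intervalIntegral.integral_deriv_eq_sub (fun x _ => hd x) (hc1.intervalIntegrable _ _)
      have hmono : ∫ x in s..x₀, -(3 * M * Real.sqrt (x₀ - x)) ≤ ∫ x in s..x₀, deriv η x := by
        refine intervalIntegral.integral_mono_on hx (hsqc'.intervalIntegrable _ _)
          (hc1.intervalIntegrable _ _) (fun x hx' => ?_)
        have hb := hderiv_bound x (by linarith [hx'.1]) (by linarith [hx'.2])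
        rw [abs_of_nonpos (by linarith [hx'.2] : x - x₀ ≤ 0), neg_sub] at hb
        have := neg_abs_le (deriv η x)
        have h7 : -(3 * M * Real.sqrt (x₀ - x)) ≤ -|deriv η x| := by linarith [abs_nonneg (deriv η x), hb]
        linarith
      have hcomp : ∫ x in s..x₀, -(3 * M * Real.sqrt (x₀ - x))
          = -(2 * M * (x₀ - s) ^ ((3:ℝ)/2)) := by
        rw [intervalIntegral.integral_neg, intervalIntegral.integral_const_mul]
        have := intervalIntegral.integral_comp_sub_left (a := s) (b := x₀)
          (fun u => Real.sqrt u) x₀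
        rw [this, sub_self]
        rw [hsqrt_int (x₀ - s) (by linarith)]
        ring
      rw [abs_of_nonpos (by linarith : s - x₀ ≤ 0), neg_sub]
      rw [hftc, hcomp] at hmono; linarith
  -- setup constants
  have hm : 0 < η x₀ := hpos x₀
  set k := (M / η x₀) ^ ((2:ℝ)/3) with hkdef
  set c := (η x₀ / M) ^ ((2:ℝ)/3) with hcdef
  have hc : 0 < c := Real.rpow_pos_of_pos (div_pos hm hMpos) _
  have hk : 0 < k := Real.rpow_pos_of_pos (div_pos hMpos hm) _
  have hck : c * k = 1 := by
    rw [hcdef, hkdef, ← Real.mul_rpow (div_pos hm hMpos).le (div_pos hMpos hm).le,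
      show (η x₀ / M) * (M / η x₀) = 1 by field_simp, Real.one_rpow]
  have hc32 : c ^ ((3:ℝ)/2) = η x₀ / M := by
    have h := Real.rpow_mul (div_pos hm hMpos).le ((2:ℝ)/3) ((3:ℝ)/2)
    rw [show (2:ℝ)/3 * ((3:ℝ)/2) = 1 by norm_num, Real.rpow_one] at h
    rw [hcdef, ← h]
  have hcoef : c / η x₀ = 1 / (M ^ ((2:ℝ)/3) * (η x₀) ^ ((1:ℝ)/3)) := by
    have hcd : c = (η x₀) ^ ((2:ℝ)/3) / M ^ ((2:ℝ)/3) := by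
      rw [hcdef, Real.div_rpow hm.le hMpos.le]
    have h2 : (η x₀) ^ ((2:ℝ)/3) * (η x₀) ^ ((1:ℝ)/3) = η x₀ := by
      rw [← Real.rpow_add hm]; norm_num
    rw [hcd, div_div, div_eq_div_iff
      (mul_pos (Real.rpow_pos_of_pos hMpos _) hm).ne'
      (mul_pos (Real.rpow_pos_of_pos hMpos _) (Real.rpow_pos_of_pos hm _)).ne']
    linear_combination (M ^ ((2:ℝ)/3)) * h2
  -- continuity facts
  have habs : Continuous (fun z : ℝ => |z| ^ ((3:ℝ)/2)) :=
    continuous_abs.rpow_const (fun x => Or.inr (by norm_num))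
  have habsnn : ∀ z : ℝ, (0:ℝ) ≤ |z| ^ ((3:ℝ)/2) := fun z => Real.rpow_nonneg (abs_nonneg z) _
  have hFpos : ∀ u : ℝ, 0 < η x₀ + 2 * M * |u| ^ ((3:ℝ)/2) := fun u =>
    add_pos_of_pos_of_nonneg hm (mul_nonneg (by linarith) (habsnn u))
  have hFc : Continuous (fun u : ℝ => 1 / (η x₀ + 2 * M * |u| ^ ((3:ℝ)/2))) :=
    continuous_const.div (continuous_const.add (continuous_const.mul habs))
      (fun u => (hFpos u).ne')
  have hgc : Continuous (fun z : ℝ => 1 / (1 + 2 * |z| ^ ((3:ℝ)/2))) :=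
    continuous_const.div (continuous_const.add (continuous_const.mul habs))
      (fun z => by positivity)
  have hf1c : Continuous (fun z : ℝ => 1 / (1 + |z| ^ ((3:ℝ)/2))) :=
    continuous_const.div (continuous_const.add habs) (fun z => by positivity)
  -- step S1: periodic shift
  have S1 : ∫ s in (0:ℝ)..L, 1 / η s = ∫ s in (x₀ - L/2)..(x₀ + L/2), 1 / η s := by
    have hper1 : Function.Periodic (fun x => 1 / η x) L := fun x => by simp [hper x]
    have h := hper1.intervalIntegral_add_eq (x₀ - L/2) 0
    rw [show x₀ - L/2 + L = x₀ + L/2 by ring, zero_add] at h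
    exact h.symm
  -- step S2: pointwise comparison
  have S2 : ∫ s in (x₀ - L/2)..(x₀ + L/2), 1 / (η x₀ + 2 * M * |s - x₀| ^ ((3:ℝ)/2))
      ≤ ∫ s in (x₀ - L/2)..(x₀ + L/2), 1 / η s := by
    refine intervalIntegral.integral_mono_on (by linarith)
      ((hFc.comp (continuous_id.sub continuous_const)).intervalIntegrable _ _)
      ((continuous_const.div hc0 (fun x => (hpos x).ne')).intervalIntegrable _ _)
      (fun s hs => ?_)
    exact one_div_le_one_div_of_le (hpos s) (hηbound s hs.1 hs.2)
  -- step S3: translate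
  have S3 : ∫ s in (x₀ - L/2)..(x₀ + L/2), 1 / (η x₀ + 2 * M * |s - x₀| ^ ((3:ℝ)/2))
      = ∫ u in (-(L/2))..(L/2), 1 / (η x₀ + 2 * M * |u| ^ ((3:ℝ)/2)) := by
    have h := intervalIntegral.integral_comp_sub_right (a := x₀ - L/2) (b := x₀ + L/2)
      (fun u => 1 / (η x₀ + 2 * M * |u| ^ ((3:ℝ)/2))) x₀
    rw [show x₀ - L/2 - x₀ = -(L/2) by ring, show x₀ + L/2 - x₀ = L/2 by ring] at h
    exact h
  -- step S4: even
  have S4 : ∫ u in (-(L/2))..(L/2), 1 / (η x₀ + 2 * M * |u| ^ ((3:ℝ)/2))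
      = 2 * ∫ u in (0:ℝ)..(L/2), 1 / (η x₀ + 2 * M * |u| ^ ((3:ℝ)/2)) :=
    even_int _ (fun x => by rw [abs_neg]) hFc (L/2)
  -- step S5: scaling substitution
  have S5 : ∫ u in (0:ℝ)..(L/2), 1 / (η x₀ + 2 * M * |u| ^ ((3:ℝ)/2))
      = c * ∫ z in (0:ℝ)..(L/2*k), 1 / (η x₀ + 2 * M * |c * z| ^ ((3:ℝ)/2)) := by
    have h := intervalIntegral.integral_comp_mul_left (a := (0:ℝ)) (b := L/2*k)
      (fun u => 1 / (η x₀ + 2 * M * |u| ^ ((3:ℝ)/2))) hc.ne'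
    rw [mul_zero, show c * (L/2*k) = L/2 * (c*k) by ring, hck, mul_one, smul_eq_mul] at h
    rw [h, ← mul_assoc, mul_inv_cancel₀ hc.ne', one_mul]
  -- step S6: simplify scaled integrand
  have hFcz : ∀ z : ℝ, 1 / (η x₀ + 2 * M * |c * z| ^ ((3:ℝ)/2))
      = (1 / η x₀) * (1 / (1 + 2 * |z| ^ ((3:ℝ)/2))) := by
    intro z
    rw [abs_mul, abs_of_pos hc, Real.mul_rpow hc.le (abs_nonneg z), hc32]
    rw [show η x₀ + 2 * M * (η x₀ / M * |z| ^ ((3:ℝ)/2))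
      = η x₀ * (1 + 2 * |z| ^ ((3:ℝ)/2)) by field_simp]
    rw [one_div, one_div, one_div, mul_inv]
  have S6 : ∫ z in (0:ℝ)..(L/2*k), 1 / (η x₀ + 2 * M * |c * z| ^ ((3:ℝ)/2))
      = (1 / η x₀) * ∫ z in (0:ℝ)..(L/2*k), 1 / (1 + 2 * |z| ^ ((3:ℝ)/2)) := by
    simp_rw [hFcz]
    rw [intervalIntegral.integral_const_mul]
  -- step T1: comparison of model integrands
  have T1 : ∫ z in (0:ℝ)..(L*k), 1 / (1 + |z| ^ ((3:ℝ)/2))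
      ≤ ∫ w in (0:ℝ)..(L*k), 1 / (1 + 2 * |w/2| ^ ((3:ℝ)/2)) := by
    refine intervalIntegral.integral_mono_on (by positivity)
      (hf1c.intervalIntegrable _ _)
      ((hgc.comp (continuous_id.div_const 2)).intervalIntegrable _ _)
      (fun w _ => ?_)
    have h8 : |w/2| = |w|/2 := by rw [abs_div]; norm_num
    have h9 : (2:ℝ) ≤ 2 ^ ((3:ℝ)/2) := by
      calc (2:ℝ) = 2 ^ (1:ℝ) := (Real.rpow_one 2).symm
        _ ≤ 2 ^ ((3:ℝ)/2) := Real.rpow_le_rpow_of_exponent_le (by norm_num) (by norm_num)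
    have h10 : (0:ℝ) < 2 ^ ((3:ℝ)/2) := Real.rpow_pos_of_pos (by norm_num) _
    have hb : 2 * |w/2| ^ ((3:ℝ)/2) ≤ |w| ^ ((3:ℝ)/2) := by
      rw [h8, Real.div_rpow (abs_nonneg w) (by norm_num : (0:ℝ) ≤ 2)]
      have hu : |w| ^ ((3:ℝ)/2) = (|w| ^ ((3:ℝ)/2) / 2 ^ ((3:ℝ)/2)) * 2 ^ ((3:ℝ)/2) :=
        (div_mul_cancel₀ _ h10.ne').symm
      have hun : 0 ≤ |w| ^ ((3:ℝ)/2) / 2 ^ ((3:ℝ)/2) := div_nonneg (habsnn w) h10.le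
      calc 2 * (|w| ^ ((3:ℝ)/2) / 2 ^ ((3:ℝ)/2))
          ≤ (|w| ^ ((3:ℝ)/2) / 2 ^ ((3:ℝ)/2)) * 2 ^ ((3:ℝ)/2) := by
            linarith [mul_le_mul_of_nonneg_left h9 hun]
        _ = |w| ^ ((3:ℝ)/2) := div_mul_cancel₀ _ h10.ne'
    have hp : (0:ℝ) < 1 + 2 * |w/2| ^ ((3:ℝ)/2) := by positivity
    exact one_div_le_one_div_of_le hp (by linarith)
  -- step T2: halving substitution
  have T2 : ∫ w in (0:ℝ)..(L*k), 1 / (1 + 2 * |w/2| ^ ((3:ℝ)/2))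
      = 2 * ∫ z in (0:ℝ)..(L/2*k), 1 / (1 + 2 * |z| ^ ((3:ℝ)/2)) := by
    have h := intervalIntegral.integral_comp_div (a := (0:ℝ)) (b := L*k)
      (fun z => 1 / (1 + 2 * |z| ^ ((3:ℝ)/2))) (two_ne_zero)
    rw [zero_div, show L*k/2 = L/2*k by ring, smul_eq_mul] at h
    exact h
  calc (1 / (M ^ ((2:ℝ)/3) * (η x₀) ^ ((1:ℝ)/3))) *
        (∫ z in (0:ℝ)..(L * k), 1 / (1 + |z| ^ ((3:ℝ)/2)))
      = (c / η x₀) * ∫ z in (0:ℝ)..(L*k), 1 / (1 + |z| ^ ((3:ℝ)/2)) := by rw [hcoef]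
    _ ≤ (c / η x₀) * (2 * ∫ z in (0:ℝ)..(L/2*k), 1 / (1 + 2 * |z| ^ ((3:ℝ)/2))) := by
        refine mul_le_mul_of_nonneg_left ?_ (div_nonneg hc.le hm.le)
        rw [← T2]; exact T1
    _ = 2 * ∫ u in (0:ℝ)..(L/2), 1 / (η x₀ + 2 * M * |u| ^ ((3:ℝ)/2)) := by
        rw [S5, S6]; ring
    _ = ∫ u in (-(L/2))..(L/2), 1 / (η x₀ + 2 * M * |u| ^ ((3:ℝ)/2)) := S4.symm
    _ = ∫ s in (x₀ - L/2)..(x₀ + L/2), 1 / (η x₀ + 2 * M * |s - x₀| ^ ((3:ℝ)/2)) := S3.symm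
    _ ≤ ∫ s in (x₀ - L/2)..(x₀ + L/2), 1 / η s := S2
    _ = ∫ s in (0:ℝ)..L, 1 / η s := S1.symm
end

section
/- Let ρ_s ≥ 0, α > 0, β ≥ 0, γ > 0 and let (b, q) be a smooth L-periodic (in x) solution on (0,L)×(0,T) of the lubrication–beam system ρ_s ∂_tt b − β ∂_xx b + α ∂_xxxx b − γ ∂_xxt b = q and ∂_t b = ∂_x(b³ ∂_x q), with b > 0 and ∫₀ᴸ q(x,t) dx = 0 for all t. Then for all t ∈ (0,T): (d/dt)[ (1/2)∫₀ᴸ (ρ_s |∂_t b|² + β|∂_x b|² + α|∂_xx b|²) dx ] + ∫₀ᴸ ( γ|∂_tx b|² + b³ |∂_x q|² ) dx = 0. -/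
open MeasureTheory intervalIntegral
noncomputable def px (f : ℝ × ℝ → ℝ) : ℝ × ℝ → ℝ := fun p => fderiv ℝ f p (1, 0)
noncomputable def pt (f : ℝ × ℝ → ℝ) : ℝ × ℝ → ℝ := fun p => fderiv ℝ f p (0, 1)
lemma hasDerivAt_px {f : ℝ × ℝ → ℝ} (hf : Differentiable ℝ f) (x t : ℝ) :
    HasDerivAt (fun ξ => f (ξ, t)) (px f (x, t)) x := by
  have h1 : HasDerivAt (fun ξ : ℝ => (ξ, t)) ((1 : ℝ), (0 : ℝ)) x :=
    (hasDerivAt_id x).prodMk (hasDerivAt_const x t)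
  exact ((hf (x, t)).hasFDerivAt.comp_hasDerivAt x h1)
lemma hasDerivAt_pt {f : ℝ × ℝ → ℝ} (hf : Differentiable ℝ f) (x t : ℝ) :
    HasDerivAt (fun τ => f (x, τ)) (pt f (x, t)) t := by
  have h1 : HasDerivAt (fun τ : ℝ => (x, τ)) ((0 : ℝ), (1 : ℝ)) t :=
    (hasDerivAt_const t x).prodMk (hasDerivAt_id t)
  exact ((hf (x, t)).hasFDerivAt.comp_hasDerivAt t h1)
lemma contDiff_px {f : ℝ × ℝ → ℝ} (hf : ContDiff ℝ (⊤ : ℕ∞) f) : ContDiff ℝ (⊤ : ℕ∞) (px f) :=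
  (hf.fderiv_right (by simp)).clm_apply contDiff_const
lemma contDiff_pt {f : ℝ × ℝ → ℝ} (hf : ContDiff ℝ (⊤ : ℕ∞) f) : ContDiff ℝ (⊤ : ℕ∞) (pt f) :=
  (hf.fderiv_right (by simp)).clm_apply contDiff_const

lemma px_pt_comm {f : ℝ × ℝ → ℝ} (hf : ContDiff ℝ (⊤ : ℕ∞) f) : px (pt f) = pt (px f) := by
  funext p
  have hdiff : Differentiable ℝ f := hf.differentiable (by simp)
  have h1 : ∀ y, HasFDerivAt f (fderiv ℝ f y) y := fun y => (hdiff y).hasFDerivAt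
  have hd2 : DifferentiableAt ℝ (fderiv ℝ f) p :=
    ((hf.fderiv_right (m := (⊤ : ℕ∞)) (by simp)).differentiable (by simp)) p
  have hsymm := second_derivative_symmetric h1 hd2.hasFDerivAt (0, 1) (1, 0)
  have e1 : px (pt f) p = (fderiv ℝ (fderiv ℝ f) p) (1, 0) (0, 1) := by
    show fderiv ℝ (fun y => fderiv ℝ f y ((0 : ℝ), (1 : ℝ))) p (1, 0) = _
    rw [fderiv_clm_apply hd2 (differentiableAt_const _)]
    simp
  have e2 : pt (px f) p = (fderiv ℝ (fderiv ℝ f) p) (0, 1) (1, 0) := by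
    show fderiv ℝ (fun y => fderiv ℝ f y ((1 : ℝ), (0 : ℝ))) p (0, 1) = _
    rw [fderiv_clm_apply hd2 (differentiableAt_const _)]
    simp
  rw [e1, e2, hsymm]

-- curried deriv rewrites
lemma deriv_px {f : ℝ × ℝ → ℝ} (hf : ContDiff ℝ (⊤ : ℕ∞) f) (x t : ℝ) :
    deriv (fun ξ => f (ξ, t)) x = px f (x, t) :=
  (hasDerivAt_px (hf.differentiable (by simp)) x t).deriv
lemma deriv_pt {f : ℝ × ℝ → ℝ} (hf : ContDiff ℝ (⊤ : ℕ∞) f) (x t : ℝ) :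
    deriv (fun τ => f (x, τ)) t = pt f (x, t) :=
  (hasDerivAt_pt (hf.differentiable (by simp)) x t).deriv

-- periodicity propagation
def PerX (L : ℝ) (f : ℝ × ℝ → ℝ) : Prop := ∀ x t, f (x + L, t) = f (x, t)

lemma PerX.px {L : ℝ} {f : ℝ × ℝ → ℝ} (hf : ContDiff ℝ (⊤ : ℕ∞) f) (h : PerX L f) :
    PerX L (px f) := by
  intro x t
  have hfun : (fun ξ => f (ξ + L, t)) = (fun ξ => f (ξ, t)) := funext fun ξ => h ξ t
  have hd : deriv (fun ξ => f (ξ, t)) (x + L) = deriv (fun ξ => f (ξ, t)) x := by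
    rw [← deriv_comp_add_const (fun ξ => f (ξ, t)) L, hfun]
  rwa [deriv_px hf, deriv_px hf] at hd
lemma PerX.pt {L : ℝ} {f : ℝ × ℝ → ℝ} (hf : ContDiff ℝ (⊤ : ℕ∞) f) (h : PerX L f) :
    PerX L (pt f) := by
  intro x t
  rw [← deriv_pt hf, ← deriv_pt hf]
  congr 1
  funext τ; exact h x τ

-- continuity of slices and integrability
lemma contSliceX (G : ℝ → ℝ → ℝ) (hG : Continuous fun p : ℝ × ℝ => G p.1 p.2) (t : ℝ) :
    Continuous (fun x => G x t) := hG.comp (continuous_id.prodMk continuous_const)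
lemma contSliceT (G : ℝ → ℝ → ℝ) (hG : Continuous fun p : ℝ × ℝ => G p.1 p.2) (x : ℝ) :
    Continuous (fun t => G x t) := hG.comp (continuous_const.prodMk continuous_id)

-- integration by parts for periodic functions
lemma ibp_periodic {L : ℝ} (u v u' v' : ℝ → ℝ)
    (hu : ∀ x, HasDerivAt u (u' x) x) (hv : ∀ x, HasDerivAt v (v' x) x)
    (hcu' : Continuous u') (hcv' : Continuous v')
    (hcu : Continuous u) (hcv : Continuous v)
    (hup : u (0 + L) = u 0) (hvp : v (0 + L) = v 0) :
    ∫ x in (0:ℝ)..L, u' x * v x = - ∫ x in (0:ℝ)..L, u x * v' x := by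
  have hsum : (∫ x in (0:ℝ)..L, (u' x * v x + u x * v' x)) = u L * v L - u 0 * v 0 := by
    exact intervalIntegral.integral_eq_sub_of_hasDerivAt
      (fun x _ => (hu x).mul (hv x))
      (((hcu'.mul hcv).add (hcu.mul hcv')).intervalIntegrable 0 L)
  erw [intervalIntegral.integral_add ((hcu'.mul hcv).intervalIntegrable 0 L)
    ((hcu.mul hcv').intervalIntegrable 0 L)] at hsum
  rw [zero_add] at hup
  rw [zero_add] at hvp
  rw [hup, hvp] at hsum
  simp only [Pi.mul_apply] at hsum
  linarith

-- differentiation under the interval integral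
lemma hasDerivAt_intervalIntegral {L : ℝ} (G G' : ℝ → ℝ → ℝ)
    (hG : Continuous fun p : ℝ × ℝ => G p.1 p.2)
    (hG' : Continuous fun p : ℝ × ℝ => G' p.1 p.2)
    (hder : ∀ x t, HasDerivAt (fun τ => G x τ) (G' x t) t) (t₀ : ℝ) :
    HasDerivAt (fun t => ∫ x in (0:ℝ)..L, G x t) (∫ x in (0:ℝ)..L, G' x t₀) t₀ := by
  obtain ⟨C, hC⟩ : ∃ C, ∀ p ∈ (Set.uIcc (0:ℝ) L) ×ˢ (Metric.closedBall t₀ 1),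
      ‖G' p.1 p.2‖ ≤ C :=
    ((isCompact_uIcc.prod (isCompact_closedBall t₀ 1)).exists_bound_of_continuousOn
      hG'.continuousOn)
  have main := intervalIntegral.hasDerivAt_integral_of_dominated_loc_of_deriv_le
    (F := fun t x => G x t) (F' := fun t x => G' x t) (x₀ := t₀) (a := (0:ℝ)) (b := L)
    (bound := fun _ => C) (μ := volume) (Metric.ball_mem_nhds t₀ one_pos)
    (Filter.Eventually.of_forall fun t =>
      (contSliceX G hG t).aestronglyMeasurable)
    ((contSliceX G hG t₀).intervalIntegrable 0 L)
    (contSliceX G' hG' t₀).aestronglyMeasurable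
    (Filter.Eventually.of_forall fun x hx τ hτ => by
      exact hC (x, τ) ⟨Set.uIoc_subset_uIcc hx, Metric.ball_subset_closedBall hτ⟩)
    (intervalIntegrable_const)
    (Filter.Eventually.of_forall fun x _ τ _ => hder x τ)
  exact main.2

lemma ibp_px {L : ℝ} {f g : ℝ × ℝ → ℝ} (hf : ContDiff ℝ (⊤ : ℕ∞) f) (hg : ContDiff ℝ (⊤ : ℕ∞) g)
    (hfp : PerX L f) (hgp : PerX L g) (t : ℝ) :
    ∫ x in (0:ℝ)..L, px f (x, t) * g (x, t) = -∫ x in (0:ℝ)..L, f (x, t) * px g (x, t) :=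
  ibp_periodic _ _ _ _
    (fun x => hasDerivAt_px (hf.differentiable (by simp)) x t)
    (fun x => hasDerivAt_px (hg.differentiable (by simp)) x t)
    ((contDiff_px hf).continuous.comp (continuous_id.prodMk continuous_const))
    ((contDiff_px hg).continuous.comp (continuous_id.prodMk continuous_const))
    (hf.continuous.comp (continuous_id.prodMk continuous_const))
    (hg.continuous.comp (continuous_id.prodMk continuous_const))
    (hfp 0 t) (hgp 0 t)

lemma energy_main (L ρs α β γ : ℝ) (B Q : ℝ × ℝ → ℝ)
    (hB : ContDiff ℝ (⊤ : ℕ∞) B) (hQ : ContDiff ℝ (⊤ : ℕ∞) Q)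
    (pB : PerX L B) (pQ : PerX L Q)
    (E1 : ∀ p : ℝ × ℝ, ρs * pt (pt B) p - β * px (px B) p
        + α * px (px (px (px B))) p - γ * pt (px (px B)) p = Q p)
    (E2 : ∀ p : ℝ × ℝ, pt B p = px (fun r => (B r) ^ 3 * px Q r) p) (t : ℝ) :
    HasDerivAt (fun τ => (1/2) * ∫ x in (0:ℝ)..L,
        ρs * (pt B (x, τ)) ^ 2 + β * (px B (x, τ)) ^ 2 + α * (px (px B) (x, τ)) ^ 2)
      (-(∫ x in (0:ℝ)..L, γ * (pt (px B) (x, t)) ^ 2 + (B (x, t)) ^ 3 * (px Q (x, t)) ^ 2)) t := by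
  -- smoothness
  have cBt : ContDiff ℝ (⊤ : ℕ∞) (pt B) := contDiff_pt hB
  have cBx : ContDiff ℝ (⊤ : ℕ∞) (px B) := contDiff_px hB
  have cBxx := contDiff_px cBx
  have cBxxx := contDiff_px cBxx
  have cBxxxx := contDiff_px cBxxx
  have cBtx : ContDiff ℝ (⊤ : ℕ∞) (pt (px B)) := contDiff_pt cBx
  have cBtt := contDiff_pt cBt
  have cBtxx : ContDiff ℝ (⊤ : ℕ∞) (pt (px (px B))) := contDiff_pt cBxx
  have cQx := contDiff_px hQ
  have cW : ContDiff ℝ (⊤ : ℕ∞) (fun r : ℝ × ℝ => (B r) ^ 3 * px Q r) := (hB.pow 3).mul cQx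
  have cPxBt := contDiff_px cBt
  -- commutation
  have comm1 : px (pt B) = pt (px B) := px_pt_comm hB
  have comm2 : px (px (pt B)) = pt (px (px B)) := by
    rw [comm1]; exact px_pt_comm cBx
  -- periodicity
  have pBx : PerX L (px B) := PerX.px hB pB
  have pBt : PerX L (pt B) := PerX.pt hB pB
  have pBxx : PerX L (px (px B)) := PerX.px cBx pBx
  have pBxxx : PerX L (px (px (px B))) := PerX.px cBxx pBxx
  have pPxBt : PerX L (px (pt B)) := PerX.px cBt pBt
  have pQx : PerX L (px Q) := PerX.px hQ pQ
  have pW : PerX L (fun r : ℝ × ℝ => (B r) ^ 3 * px Q r) := by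
    intro x τ; simp only [pB x τ, pQx x τ]
  -- slice continuity helper
  have sc : ∀ {f : ℝ × ℝ → ℝ}, ContDiff ℝ (⊤ : ℕ∞) f → Continuous (fun x => f (x, t)) :=
    fun hf => hf.continuous.comp (continuous_id.prodMk continuous_const)
  have ii : ∀ {h : ℝ → ℝ}, Continuous h → IntervalIntegrable h volume 0 L :=
    fun hc => hc.intervalIntegrable 0 L
  -- derivative under the integral
  have hGc : Continuous fun p : ℝ × ℝ => ρs * (pt B (p.1, p.2)) ^ 2
      + β * (px B (p.1, p.2)) ^ 2 + α * (px (px B) (p.1, p.2)) ^ 2 := by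
    exact ((continuous_const.mul (cBt.continuous.pow 2)).add
      (continuous_const.mul (cBx.continuous.pow 2))).add
      (continuous_const.mul (cBxx.continuous.pow 2))
  have hG'c : Continuous fun p : ℝ × ℝ =>
      2 * ρs * (pt B (p.1, p.2) * pt (pt B) (p.1, p.2))
      + 2 * β * (px B (p.1, p.2) * pt (px B) (p.1, p.2))
      + 2 * α * (px (px B) (p.1, p.2) * pt (px (px B)) (p.1, p.2)) := by
    exact ((continuous_const.mul (cBt.continuous.mul cBtt.continuous)).add
      (continuous_const.mul (cBx.continuous.mul cBtx.continuous))).add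
      (continuous_const.mul (cBxx.continuous.mul cBtxx.continuous))
  have hder : ∀ x τ, HasDerivAt
      (fun s => ρs * (pt B (x, s)) ^ 2 + β * (px B (x, s)) ^ 2 + α * (px (px B) (x, s)) ^ 2)
      (2 * ρs * (pt B (x, τ) * pt (pt B) (x, τ))
        + 2 * β * (px B (x, τ) * pt (px B) (x, τ))
        + 2 * α * (px (px B) (x, τ) * pt (px (px B)) (x, τ))) τ := by
    intro x τ
    have h1 := hasDerivAt_pt (cBt.differentiable (by simp)) x τ
    have h2 := hasDerivAt_pt (cBx.differentiable (by simp)) x τ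
    have h3 := hasDerivAt_pt (cBxx.differentiable (by simp)) x τ
    have h := (((h1.pow 2).const_mul ρs).add ((h2.pow 2).const_mul β)).add
      ((h3.pow 2).const_mul α)
    refine h.congr_deriv ?_
    push_cast
    ring
  have hd := (hasDerivAt_intervalIntegral (L := L)
      (fun x τ => ρs * (pt B (x, τ)) ^ 2 + β * (px B (x, τ)) ^ 2 + α * (px (px B) (x, τ)) ^ 2)
      (fun x τ => 2 * ρs * (pt B (x, τ) * pt (pt B) (x, τ))
        + 2 * β * (px B (x, τ) * pt (px B) (x, τ))
        + 2 * α * (px (px B) (x, τ) * pt (px (px B)) (x, τ)))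
      hGc hG'c hder t).const_mul (1/2)
  -- now identify the derivative value
  have key : (1/2) * (∫ x in (0:ℝ)..L,
      2 * ρs * (pt B (x, t) * pt (pt B) (x, t))
        + 2 * β * (px B (x, t) * pt (px B) (x, t))
        + 2 * α * (px (px B) (x, t) * pt (px (px B)) (x, t)))
      = -(∫ x in (0:ℝ)..L, γ * (pt (px B) (x, t)) ^ 2 + (B (x, t)) ^ 3 * (px Q (x, t)) ^ 2) := by
    -- integration by parts identities
    have I2 : (∫ x in (0:ℝ)..L, px (px B) (x, t) * pt B (x, t))
        = -∫ x in (0:ℝ)..L, px B (x, t) * pt (px B) (x, t) := by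
      have h := ibp_px cBx cBt pBx pBt t
      rwa [comm1] at h
    have I3 : (∫ x in (0:ℝ)..L, px (px (px (px B))) (x, t) * pt B (x, t))
        = ∫ x in (0:ℝ)..L, px (px B) (x, t) * pt (px (px B)) (x, t) := by
      have h1 := ibp_px cBxxx cBt pBxxx pBt t
      have h2 := ibp_px cBxx cPxBt pBxx pPxBt t
      rw [h1, h2, neg_neg]
      apply intervalIntegral.integral_congr
      intro x _
      rw [comm2]
    have I4 : (∫ x in (0:ℝ)..L, pt (px (px B)) (x, t) * pt B (x, t))
        = -∫ x in (0:ℝ)..L, (pt (px B) (x, t)) ^ 2 := by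
      have h := ibp_px cPxBt cBt pPxBt pBt t
      rw [← comm2]
      rw [h]
      congr 1
      apply intervalIntegral.integral_congr
      intro x _
      rw [comm1]
      ring
    have I5 : (∫ x in (0:ℝ)..L, Q (x, t) * pt B (x, t))
        = -∫ x in (0:ℝ)..L, (B (x, t)) ^ 3 * (px Q (x, t)) ^ 2 := by
      have h := ibp_px cW hQ pW pQ t
      have e1 : (∫ x in (0:ℝ)..L, Q (x, t) * pt B (x, t))
          = ∫ x in (0:ℝ)..L, px (fun r : ℝ × ℝ => (B r) ^ 3 * px Q r) (x, t) * Q (x, t) := by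
        apply intervalIntegral.integral_congr
        intro x _
        show Q (x, t) * pt B (x, t)
          = px (fun r : ℝ × ℝ => (B r) ^ 3 * px Q r) (x, t) * Q (x, t)
        rw [E2 (x, t)]
        ring
      rw [e1, h]
      congr 1
      apply intervalIntegral.integral_congr
      intro x _
      simp only
      ring
    -- pointwise rewrite of the integrand using the beam equation
    have step1 : ∀ x : ℝ, (1/2) * (2 * ρs * (pt B (x, t) * pt (pt B) (x, t))
        + 2 * β * (px B (x, t) * pt (px B) (x, t))
        + 2 * α * (px (px B) (x, t) * pt (px (px B)) (x, t)))
        = β * (px (px B) (x, t) * pt B (x, t) + px B (x, t) * pt (px B) (x, t))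
          + α * (px (px B) (x, t) * pt (px (px B)) (x, t) - px (px (px (px B))) (x, t) * pt B (x, t))
          + γ * (pt (px (px B)) (x, t) * pt B (x, t))
          + Q (x, t) * pt B (x, t) := by
      intro x
      linear_combination (pt B (x, t)) * (E1 (x, t))
    rw [← intervalIntegral.integral_const_mul]
    rw [intervalIntegral.integral_congr (g := fun x =>
      β * (px (px B) (x, t) * pt B (x, t) + px B (x, t) * pt (px B) (x, t))
        + α * (px (px B) (x, t) * pt (px (px B)) (x, t) - px (px (px (px B))) (x, t) * pt B (x, t))
        + γ * (pt (px (px B)) (x, t) * pt B (x, t))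
        + Q (x, t) * pt B (x, t)) (fun x _ => step1 x)]
    -- integrability facts
    have j1 := ii (((sc cBxx).mul (sc cBt)).add ((sc cBx).mul (sc cBtx)))
    have j2 := ii (((sc cBxx).mul (sc cBtxx)).sub ((sc cBxxxx).mul (sc cBt)))
    have j3 := ii ((sc cBtxx).mul (sc cBt))
    have j4 := ii ((sc hQ).mul (sc cBt))
    simp only [Pi.mul_def, Pi.add_def, Pi.sub_def] at j1 j2 j3 j4
    rw [intervalIntegral.integral_add (((j1.const_mul β).add (j2.const_mul α)).add (j3.const_mul γ)) j4]
    rw [intervalIntegral.integral_add ((j1.const_mul β).add (j2.const_mul α)) (j3.const_mul γ)]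
    rw [intervalIntegral.integral_add (j1.const_mul β) (j2.const_mul α)]
    rw [intervalIntegral.integral_const_mul, intervalIntegral.integral_const_mul,
      intervalIntegral.integral_const_mul]
    have z1 : (∫ x in (0:ℝ)..L, px (px B) (x, t) * pt B (x, t) + px B (x, t) * pt (px B) (x, t)) = 0 := by
      erw [intervalIntegral.integral_add (ii ((sc cBxx).mul (sc cBt))) (ii ((sc cBx).mul (sc cBtx))), I2]
      simp only [Pi.mul_apply]
      ring
    have z2 : (∫ x in (0:ℝ)..L, px (px B) (x, t) * pt (px (px B)) (x, t)
        - px (px (px (px B))) (x, t) * pt B (x, t)) = 0 := by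
      erw [intervalIntegral.integral_sub (ii ((sc cBxx).mul (sc cBtxx))) (ii ((sc cBxxxx).mul (sc cBt))), I3]
      simp only [Pi.mul_apply]
      ring
    rw [z1, z2, I4, I5]
    erw [intervalIntegral.integral_add ((ii ((sc cBtx).pow 2)).const_mul γ)
      (ii ((sc (hB.pow 3)).mul ((sc cQx).pow 2)))]
    simp only [Pi.mul_apply, Pi.pow_apply]
    rw [intervalIntegral.integral_const_mul]
    ring
  rw [key] at hd
  exact hd

theorem stmt16 (L T ρs α β γ : ℝ) (hL : 0 < L) (hT : 0 < T)
    (hρ : 0 ≤ ρs) (hα : 0 < α) (hβ : 0 ≤ β) (hγ : 0 < γ)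
    (b q : ℝ → ℝ → ℝ)
    (hb : ContDiff ℝ (⊤ : ℕ∞) (fun p : ℝ × ℝ => b p.1 p.2))
    (hq : ContDiff ℝ (⊤ : ℕ∞) (fun p : ℝ × ℝ => q p.1 p.2))
    (hbper : ∀ x t, b (x + L) t = b x t)
    (hqper : ∀ x t, q (x + L) t = q x t)
    (hbpos : ∀ x t, 0 < b x t)
    (heq1 : ∀ x t,
      ρs * iteratedDeriv 2 (fun τ => b x τ) t
        - β * iteratedDeriv 2 (fun ξ => b ξ t) x
        + α * iteratedDeriv 4 (fun ξ => b ξ t) x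
        - γ * deriv (fun τ => iteratedDeriv 2 (fun ξ => b ξ τ) x) t = q x t)
    (heq2 : ∀ x t,
      deriv (fun τ => b x τ) t
        = deriv (fun ξ => (b ξ t) ^ 3 * deriv (fun ζ => q ζ t) ξ) x)
    (hqmean : ∀ t, (∫ x in (0:ℝ)..L, q x t) = 0) :
    ∀ t ∈ Set.Ioo 0 T,
      deriv (fun τ => (1/2) * ∫ x in (0:ℝ)..L,
          ρs * (deriv (fun s => b x s) τ) ^ 2
            + β * (deriv (fun ξ => b ξ τ) x) ^ 2
            + α * (iteratedDeriv 2 (fun ξ => b ξ τ) x) ^ 2) t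
        + (∫ x in (0:ℝ)..L,
            γ * (deriv (fun τ => deriv (fun ξ => b ξ τ) x) t) ^ 2
              + (b x t) ^ 3 * (deriv (fun ξ => q ξ t) x) ^ 2) = 0 := by
  intro t ht
  set B : ℝ × ℝ → ℝ := fun p => b p.1 p.2 with hBdef
  set Q : ℝ × ℝ → ℝ := fun p => q p.1 p.2 with hQdef
  have dB := hb.differentiable (by simp)
  have dQ := hq.differentiable (by simp)
  have cBx := contDiff_px hb
  have cBxx := contDiff_px cBx
  have cBxxx := contDiff_px cBxx
  have cBt := contDiff_pt hb
  have cW : ContDiff ℝ (⊤ : ℕ∞) (fun r : ℝ × ℝ => (B r) ^ 3 * px Q r) :=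
    (hb.pow 3).mul (contDiff_px hq)
  -- curried rewrites
  have rbt : ∀ x τ, deriv (fun s => b x s) τ = pt B (x, τ) :=
    fun x τ => (hasDerivAt_pt dB x τ).deriv
  have rbx : ∀ x τ, deriv (fun ξ => b ξ τ) x = px B (x, τ) :=
    fun x τ => (hasDerivAt_px dB x τ).deriv
  have rqx : ∀ x τ, deriv (fun ζ => q ζ τ) x = px Q (x, τ) :=
    fun x τ => (hasDerivAt_px dQ x τ).deriv
  have rbxx : ∀ x τ, iteratedDeriv 2 (fun ξ => b ξ τ) x = px (px B) (x, τ) := by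
    intro x τ
    rw [show (2:ℕ) = 1 + 1 from rfl, iteratedDeriv_succ, iteratedDeriv_one]
    rw [show deriv (fun ξ => b ξ τ) = fun ξ => px B (ξ, τ) from funext fun ξ => rbx ξ τ]
    exact (hasDerivAt_px (cBx.differentiable (by simp)) x τ).deriv
  have rbxxx : ∀ x τ, iteratedDeriv 3 (fun ξ => b ξ τ) x = px (px (px B)) (x, τ) := by
    intro x τ
    rw [show (3:ℕ) = 2 + 1 from rfl, iteratedDeriv_succ]
    rw [show iteratedDeriv 2 (fun ξ => b ξ τ) = fun ξ => px (px B) (ξ, τ) from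
      funext fun ξ => rbxx ξ τ]
    exact (hasDerivAt_px (cBxx.differentiable (by simp)) x τ).deriv
  have rbxxxx : ∀ x τ, iteratedDeriv 4 (fun ξ => b ξ τ) x = px (px (px (px B))) (x, τ) := by
    intro x τ
    rw [show (4:ℕ) = 3 + 1 from rfl, iteratedDeriv_succ]
    rw [show iteratedDeriv 3 (fun ξ => b ξ τ) = fun ξ => px (px (px B)) (ξ, τ) from
      funext fun ξ => rbxxx ξ τ]
    exact (hasDerivAt_px (cBxxx.differentiable (by simp)) x τ).deriv
  have rbtt : ∀ x τ, iteratedDeriv 2 (fun s => b x s) τ = pt (pt B) (x, τ) := by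
    intro x τ
    rw [show (2:ℕ) = 1 + 1 from rfl, iteratedDeriv_succ, iteratedDeriv_one]
    rw [show deriv (fun s => b x s) = fun s => pt B (x, s) from funext fun s => rbt x s]
    exact (hasDerivAt_pt (cBt.differentiable (by simp)) x τ).deriv
  have rbtxx : ∀ x τ, deriv (fun s => iteratedDeriv 2 (fun ξ => b ξ s) x) τ
      = pt (px (px B)) (x, τ) := by
    intro x τ
    rw [show (fun s => iteratedDeriv 2 (fun ξ => b ξ s) x) = fun s => px (px B) (x, s) from
      funext fun s => rbxx x s]
    exact (hasDerivAt_pt (cBxx.differentiable (by simp)) x τ).deriv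
  have rbtx : ∀ x τ, deriv (fun s => deriv (fun ξ => b ξ s) x) τ = pt (px B) (x, τ) := by
    intro x τ
    rw [show (fun s => deriv (fun ξ => b ξ s) x) = fun s => px B (x, s) from
      funext fun s => rbx x s]
    exact (hasDerivAt_pt (cBx.differentiable (by simp)) x τ).deriv
  -- translated equations
  have E1 : ∀ p : ℝ × ℝ, ρs * pt (pt B) p - β * px (px B) p
      + α * px (px (px (px B))) p - γ * pt (px (px B)) p = Q p := by
    intro p
    have h := heq1 p.1 p.2
    rw [rbtt, rbxx, rbxxxx, rbtxx] at h
    exact h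
  have E2 : ∀ p : ℝ × ℝ, pt B p = px (fun r => (B r) ^ 3 * px Q r) p := by
    rintro ⟨x, τ⟩
    have h := heq2 x τ
    rw [rbt] at h
    rw [show (fun ξ => (b ξ τ) ^ 3 * deriv (fun ζ => q ζ τ) ξ)
        = fun ξ => (B (ξ, τ)) ^ 3 * px Q (ξ, τ) from
      funext fun ξ => by rw [rqx ξ τ]] at h
    rw [h]
    exact (hasDerivAt_px (cW.differentiable (by simp)) x τ).deriv
  have pB : PerX L B := fun x τ => hbper x τ
  have pQ : PerX L Q := fun x τ => hqper x τ
  have H := energy_main L ρs α β γ B Q hb hq pB pQ E1 E2 t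
  have hdval := H.deriv
  have rptB : ∀ x τ, deriv (fun s => px B (x, s)) τ = pt (px B) (x, τ) :=
    fun x τ => (hasDerivAt_pt (cBx.differentiable (by simp)) x τ).deriv
  simp only [rbt, rbx, rbxx, rbtx, rqx, rptB]
  rw [hdval]
  have : (∫ x in (0:ℝ)..L, γ * (pt (px B) (x, t)) ^ 2 + (b x t) ^ 3 * (px Q (x, t)) ^ 2)
      = ∫ x in (0:ℝ)..L, γ * (pt (px B) (x, t)) ^ 2 + (B (x, t)) ^ 3 * (px Q (x, t)) ^ 2 := rfl
  rw [this]
  ring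
end

section
/- Let ρ_s ≥ 0, α, β, γ ≥ 0 and let (b, q) be a smooth L-periodic solution of ρ_s ∂_tt b − β ∂_xx b + α ∂_xxxx b − γ ∂_xxt b = q, ∂_t b = ∂_x(b³ ∂_x q), with b > 0. Then for all t: (d/dt)[ ∫₀ᴸ ( (γ/2)|∂_xx b|² + 1/(2b) − ρ_s ∂_t b ∂_xx b ) dx ] + ∫₀ᴸ ( β|∂_xx b|² + α|∂_xxx b|² ) dx = ∫₀ᴸ ρ_s |∂_tx b|² dx. -/
open MeasureTheory intervalIntegral Metric
noncomputable def DX (f : ℝ × ℝ → ℝ) : ℝ × ℝ → ℝ := fun p => fderiv ℝ f p (1, 0)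
noncomputable def DT (f : ℝ × ℝ → ℝ) : ℝ × ℝ → ℝ := fun p => fderiv ℝ f p (0, 1)
lemma ContDiff.dx {f : ℝ × ℝ → ℝ} (hf : ContDiff ℝ (⊤ : ℕ∞) f) : ContDiff ℝ (⊤ : ℕ∞) (DX f) :=
  (hf.fderiv_right (by simp)).clm_apply contDiff_const
lemma ContDiff.dt {f : ℝ × ℝ → ℝ} (hf : ContDiff ℝ (⊤ : ℕ∞) f) : ContDiff ℝ (⊤ : ℕ∞) (DT f) :=
  (hf.fderiv_right (by simp)).clm_apply contDiff_const
lemma hasDerivAt_sliceX {f : ℝ × ℝ → ℝ} {x t : ℝ} (hf : DifferentiableAt ℝ f (x, t)) :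
    HasDerivAt (fun ξ => f (ξ, t)) (DX f (x, t)) x :=
  hf.hasFDerivAt.comp_hasDerivAt x ((hasDerivAt_id x).prodMk (hasDerivAt_const x t))
lemma hasDerivAt_sliceT {f : ℝ × ℝ → ℝ} {x t : ℝ} (hf : DifferentiableAt ℝ f (x, t)) :
    HasDerivAt (fun τ => f (x, τ)) (DT f (x, t)) t :=
  hf.hasFDerivAt.comp_hasDerivAt t ((hasDerivAt_const t x).prodMk (hasDerivAt_id t))

lemma sliceX_iteratedDeriv {f : ℝ × ℝ → ℝ} (hf : ContDiff ℝ (⊤ : ℕ∞) f) (n : ℕ) :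
    ∀ x t : ℝ, iteratedDeriv n (fun ξ => f (ξ, t)) x = (DX^[n] f) (x, t) := by
  induction n generalizing f with
  | zero => intro x t; simp
  | succ n ih =>
    intro x t
    rw [iteratedDeriv_succ']
    have : (deriv fun ξ => f (ξ, t)) = fun ξ => DX f (ξ, t) := by
      funext ξ
      exact (hasDerivAt_sliceX ((hf.differentiable (by simp)).differentiableAt)).deriv
    rw [this, ih hf.dx, Function.iterate_succ_apply]

lemma sliceT_iteratedDeriv {f : ℝ × ℝ → ℝ} (hf : ContDiff ℝ (⊤ : ℕ∞) f) (n : ℕ) :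
    ∀ x t : ℝ, iteratedDeriv n (fun τ => f (x, τ)) t = (DT^[n] f) (x, t) := by
  induction n generalizing f with
  | zero => intro x t; simp
  | succ n ih =>
    intro x t
    rw [iteratedDeriv_succ']
    have : (deriv fun τ => f (x, τ)) = fun τ => DT f (x, τ) := by
      funext τ
      exact (hasDerivAt_sliceT ((hf.differentiable (by simp)).differentiableAt)).deriv
    rw [this, ih hf.dt, Function.iterate_succ_apply]

lemma fderiv_translate {f : ℝ × ℝ → ℝ} (hf : Differentiable ℝ f) (c : ℝ × ℝ)
    (hper : ∀ p : ℝ × ℝ, f (p + c) = f p) (p : ℝ × ℝ) :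
    fderiv ℝ f (p + c) = fderiv ℝ f p := by
  have h1 : HasFDerivAt (fun q : ℝ × ℝ => q + c) (ContinuousLinearMap.id ℝ (ℝ × ℝ)) p :=
    (hasFDerivAt_id p).add_const c
  have h2 : HasFDerivAt (f ∘ fun q => q + c) ((fderiv ℝ f (p + c)).comp
      (ContinuousLinearMap.id ℝ (ℝ × ℝ))) p := (hf (p + c)).hasFDerivAt.comp p h1
  have h3 : (f ∘ fun q => q + c) = f := funext fun q => hper q
  rw [h3] at h2
  rw [h2.fderiv, ContinuousLinearMap.comp_id]

lemma DX_periodic {f : ℝ × ℝ → ℝ} {L : ℝ} (hf : Differentiable ℝ f)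
    (hper : ∀ x t, f (x + L, t) = f (x, t)) : ∀ x t, DX f (x + L, t) = DX f (x, t) := by
  intro x t
  have hper' : ∀ p : ℝ × ℝ, f (p + (L, 0)) = f p := by
    intro p
    have : p + (L, 0) = (p.1 + L, p.2) := by simp [Prod.ext_iff]
    rw [this]
    exact hper p.1 p.2
  have h := fderiv_translate hf (L, 0) hper' (x, t)
  have hxy : (x, t) + (L, (0:ℝ)) = (x + L, t) := by simp [Prod.ext_iff]
  rw [hxy] at h
  show fderiv ℝ f (x + L, t) (1, 0) = _
  rw [h]; rfl

lemma DT_periodic {f : ℝ × ℝ → ℝ} {L : ℝ} (hf : Differentiable ℝ f)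
    (hper : ∀ x t, f (x + L, t) = f (x, t)) : ∀ x t, DT f (x + L, t) = DT f (x, t) := by
  intro x t
  have hper' : ∀ p : ℝ × ℝ, f (p + (L, 0)) = f p := by
    intro p
    have : p + (L, 0) = (p.1 + L, p.2) := by simp [Prod.ext_iff]
    rw [this]
    exact hper p.1 p.2
  have h := fderiv_translate hf (L, 0) hper' (x, t)
  have hxy : (x, t) + (L, (0:ℝ)) = (x + L, t) := by simp [Prod.ext_iff]
  rw [hxy] at h
  show fderiv ℝ f (x + L, t) (0, 1) = _
  rw [h]; rfl

/-- Differentiation under the interval integral for a function continuous with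
continuous `DT`, everywhere differentiable in the second variable. -/
lemma hasDerivAt_intervalIntegral_of_contDiff {F : ℝ × ℝ → ℝ} (hF : ContDiff ℝ (⊤ : ℕ∞) F)
    (a b t₀ : ℝ) :
    HasDerivAt (fun τ => ∫ x in a..b, F (x, τ)) (∫ x in a..b, DT F (x, t₀)) t₀ := by
  have hFc : Continuous F := hF.continuous
  have hDTc : Continuous (DT F) := hF.dt.continuous
  obtain ⟨C, hC⟩ : ∃ C, ∀ p ∈ (Set.uIcc a b ×ˢ Set.Icc (t₀ - 1) (t₀ + 1)), ‖DT F p‖ ≤ C := by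
    have hcomp : IsCompact (Set.uIcc a b ×ˢ Set.Icc (t₀ - 1) (t₀ + 1)) :=
      isCompact_uIcc.prod isCompact_Icc
    exact hcomp.exists_bound_of_continuousOn hDTc.continuousOn
  have main := intervalIntegral.hasDerivAt_integral_of_dominated_loc_of_deriv_le
    (F := fun τ x => F (x, τ)) (F' := fun τ x => DT F (x, τ)) (x₀ := t₀)
    (a := a) (b := b) (μ := volume) (bound := fun _ => C) (ball_mem_nhds t₀ one_pos)
    (Filter.Eventually.of_forall fun τ =>
      (hFc.comp (continuous_id.prodMk continuous_const)).aestronglyMeasurable)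
    ((hFc.comp (continuous_id.prodMk continuous_const)).intervalIntegrable a b)
    ((hDTc.comp (continuous_id.prodMk continuous_const)).aestronglyMeasurable)
    ?_ (_root_.intervalIntegrable_const (c := C)) ?_
  · exact main.2
  · refine Filter.Eventually.of_forall fun x hx => fun τ hτ => ?_
    refine hC (x, τ) ?_
    constructor
    · exact Set.uIoc_subset_uIcc hx
    · have := mem_ball_iff_norm.1 hτ
      have h1 : |τ - t₀| ≤ 1 := le_of_lt (by simpa [Real.norm_eq_abs] using this)
      have h2 := abs_le.1 h1
      constructor <;> simp only [] <;> [linarith [h2.1]; linarith [h2.2]]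
  · exact Filter.Eventually.of_forall fun x _ => fun τ _ =>
      hasDerivAt_sliceT ((hF.differentiable (by simp)).differentiableAt)

/-- Integration by parts for periodic functions on [0, L]. -/
lemma ibp_per {L : ℝ} {f g f' g' : ℝ → ℝ}
    (hf : ∀ x, HasDerivAt f (f' x) x) (hg : ∀ x, HasDerivAt g (g' x) x)
    (hf' : Continuous f') (hg' : Continuous g')
    (hfp : f L = f 0) (hgp : g L = g 0) :
    ∫ x in (0:ℝ)..L, f' x * g x = -∫ x in (0:ℝ)..L, f x * g' x := by
  have hcf : Continuous f :=
    (Differentiable.continuous fun x => (hf x).differentiableAt)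
  have hcg : Continuous g :=
    (Differentiable.continuous fun x => (hg x).differentiableAt)
  have key := integral_deriv_mul_eq_sub_of_hasDerivAt (a := (0:ℝ)) (b := L)
    hcf.continuousOn hcg.continuousOn (fun x _ => hf x) (fun x _ => hg x)
    (hf'.intervalIntegrable 0 L) (hg'.intervalIntegrable 0 L)
  rw [intervalIntegral.integral_add (f := fun x => f' x * g x) (g := fun x => f x * g' x) ((hf'.mul hcg).intervalIntegrable 0 L)
    ((hcf.mul hg').intervalIntegrable 0 L), hfp, hgp] at key
  linarith

lemma fderiv_apply_hasFDerivAt {f : ℝ × ℝ → ℝ} (hf : ContDiff ℝ (⊤ : ℕ∞) f) (v : ℝ × ℝ) (p : ℝ × ℝ) :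
    HasFDerivAt (fun q => fderiv ℝ f q v)
      ((fderiv ℝ (fderiv ℝ f) p).flip v) p := by
  have h2 : DifferentiableAt ℝ (fderiv ℝ f) p :=
    ((hf.fderiv_right (m := (⊤ : ℕ∞)) (by simp)).differentiable (by simp)).differentiableAt
  have := ((ContinuousLinearMap.apply ℝ ℝ v).hasFDerivAt.comp p h2.hasFDerivAt)
  exact this

lemma DX_DT_comm {f : ℝ × ℝ → ℝ} (hf : ContDiff ℝ (⊤ : ℕ∞) f) : DX (DT f) = DT (DX f) := by
  funext p
  have hd : ∀ y, HasFDerivAt f (fderiv ℝ f y) y := fun y =>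
    ((hf.differentiable (by simp)) y).hasFDerivAt
  have h2 : HasFDerivAt (fderiv ℝ f) (fderiv ℝ (fderiv ℝ f) p) p :=
    (((hf.fderiv_right (m := (⊤ : ℕ∞)) (by simp)).differentiable (by simp)) p).hasFDerivAt
  have hsymm := second_derivative_symmetric hd h2 (1,0) (0,1)
  have e1 : DX (DT f) p = fderiv ℝ (fderiv ℝ f) p (1,0) (0,1) := by
    show fderiv ℝ (fun q => fderiv ℝ f q (0,1)) p (1,0) = _
    rw [(fderiv_apply_hasFDerivAt hf (0,1) p).fderiv]
    rfl
  have e2 : DT (DX f) p = fderiv ℝ (fderiv ℝ f) p (0,1) (1,0) := by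
    show fderiv ℝ (fun q => fderiv ℝ f q (1,0)) p (0,1) = _
    rw [(fderiv_apply_hasFDerivAt hf (1,0) p).fderiv]
    rfl
  rw [e1, e2, hsymm]

lemma ibp_per_zero {L : ℝ} {f g f' g' : ℝ → ℝ}
    (hf : ∀ x, HasDerivAt f (f' x) x) (hg : ∀ x, HasDerivAt g (g' x) x)
    (hf' : Continuous f') (hg' : Continuous g')
    (hfp : f L = f 0) (hgp : g L = g 0) :
    ∫ x in (0:ℝ)..L, (f' x * g x + f x * g' x) = 0 := by
  have hcf : Continuous f :=
    (Differentiable.continuous fun x => (hf x).differentiableAt)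
  have hcg : Continuous g :=
    (Differentiable.continuous fun x => (hg x).differentiableAt)
  have key := integral_deriv_mul_eq_sub_of_hasDerivAt (a := (0:ℝ)) (b := L)
    hcf.continuousOn hcg.continuousOn (fun x _ => hf x) (fun x _ => hg x)
    (hf'.intervalIntegrable 0 L) (hg'.intervalIntegrable 0 L)
  rw [key, hfp, hgp]
  ring

theorem stmt17 (L T ρs α β γ : ℝ) (hL : 0 < L) (hT : 0 < T)
    (hρ : 0 ≤ ρs) (hα : 0 ≤ α) (hβ : 0 ≤ β) (hγ : 0 ≤ γ)
    (b q : ℝ → ℝ → ℝ)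
    (hb : ContDiff ℝ (⊤ : ℕ∞) (fun p : ℝ × ℝ => b p.1 p.2))
    (hq : ContDiff ℝ (⊤ : ℕ∞) (fun p : ℝ × ℝ => q p.1 p.2))
    (hbper : ∀ x t, b (x + L) t = b x t)
    (hqper : ∀ x t, q (x + L) t = q x t)
    (hbpos : ∀ x t, 0 < b x t)
    (heq1 : ∀ x t,
      ρs * iteratedDeriv 2 (fun τ => b x τ) t
        - β * iteratedDeriv 2 (fun ξ => b ξ t) x
        + α * iteratedDeriv 4 (fun ξ => b ξ t) x
        - γ * deriv (fun τ => iteratedDeriv 2 (fun ξ => b ξ τ) x) t = q x t)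
    (heq2 : ∀ x t,
      deriv (fun τ => b x τ) t
        = deriv (fun ξ => (b ξ t) ^ 3 * deriv (fun ζ => q ζ t) ξ) x) :
    ∀ t ∈ Set.Ioo 0 T,
      deriv (fun τ => ∫ x in (0:ℝ)..L,
          (γ / 2) * (iteratedDeriv 2 (fun ξ => b ξ τ) x) ^ 2
            + 1 / (2 * b x τ)
            - ρs * deriv (fun s => b x s) τ * iteratedDeriv 2 (fun ξ => b ξ τ) x) t
        + (∫ x in (0:ℝ)..L,
            β * (iteratedDeriv 2 (fun ξ => b ξ t) x) ^ 2
              + α * (iteratedDeriv 3 (fun ξ => b ξ t) x) ^ 2)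
      = ∫ x in (0:ℝ)..L, ρs * (deriv (fun τ => deriv (fun ξ => b ξ τ) x) t) ^ 2 := by
  intro t ht
  -- basic abbreviations
  set B : ℝ × ℝ → ℝ := fun p => b p.1 p.2 with hBdef
  set Q : ℝ × ℝ → ℝ := fun p => q p.1 p.2 with hQdef
  have hBpos : ∀ p : ℝ × ℝ, 0 < B p := fun p => hbpos p.1 p.2
  have hB1 : ContDiff ℝ (⊤ : ℕ∞) (DX B) := hb.dx
  have hB2 : ContDiff ℝ (⊤ : ℕ∞) (DX (DX B)) := hb.dx.dx
  have hB3 : ContDiff ℝ (⊤ : ℕ∞) (DX (DX (DX B))) := hb.dx.dx.dx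
  have hB4 : ContDiff ℝ (⊤ : ℕ∞) (DX (DX (DX (DX B)))) := hb.dx.dx.dx.dx
  have hm : ContDiff ℝ (⊤ : ℕ∞) (DT B) := hb.dt
  have hm1 : ContDiff ℝ (⊤ : ℕ∞) (DX (DT B)) := hb.dt.dx
  have hm2 : ContDiff ℝ (⊤ : ℕ∞) (DX (DX (DT B))) := hb.dt.dx.dx
  have hQ1 : ContDiff ℝ (⊤ : ℕ∞) (DX Q) := hq.dx
  -- H = b^3 q_x
  set H : ℝ × ℝ → ℝ := fun p => (B p) ^ 3 * DX Q p with hHdef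
  have hH : ContDiff ℝ (⊤ : ℕ∞) H := (hb.pow 3).mul hq.dx
  have hH1 : ContDiff ℝ (⊤ : ℕ∞) (DX H) := hH.dx
  -- differentiability helpers
  have hdiff : ∀ {g : ℝ × ℝ → ℝ}, ContDiff ℝ (⊤ : ℕ∞) g → ∀ p : ℝ × ℝ, DifferentiableAt ℝ g p :=
    fun hg p => (hg.differentiable (by simp)).differentiableAt
  -- Clairaut
  have comm0 : DX (DT B) = DT (DX B) := DX_DT_comm hb
  have comm2 : DT (DX (DX B)) = DX (DX (DT B)) := by
    rw [← DX_DT_comm hb.dx, ← DX_DT_comm hb]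
  -- periodicity chains
  have perB : ∀ x τ, B (x + L, τ) = B (x, τ) := fun x τ => hbper x τ
  have perQ : ∀ x τ, Q (x + L, τ) = Q (x, τ) := fun x τ => hqper x τ
  have perB1 : ∀ x τ, DX B (x + L, τ) = DX B (x, τ) :=
    DX_periodic (hb.differentiable (by simp)) perB
  have perB2 : ∀ x τ, DX (DX B) (x + L, τ) = DX (DX B) (x, τ) :=
    DX_periodic (hB1.differentiable (by simp)) perB1
  have perB3 : ∀ x τ, DX (DX (DX B)) (x + L, τ) = DX (DX (DX B)) (x, τ) :=
    DX_periodic (hB2.differentiable (by simp)) perB2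
  have perm : ∀ x τ, DT B (x + L, τ) = DT B (x, τ) :=
    DT_periodic (hb.differentiable (by simp)) perB
  have perm1 : ∀ x τ, DX (DT B) (x + L, τ) = DX (DT B) (x, τ) :=
    DX_periodic (hm.differentiable (by simp)) perm
  have perQ1 : ∀ x τ, DX Q (x + L, τ) = DX Q (x, τ) :=
    DX_periodic (hq.differentiable (by simp)) perQ
  have perH : ∀ x τ, H (x + L, τ) = H (x, τ) := by
    intro x τ; simp only [hHdef, perB, perQ1]
  -- restated equations
  have heq1' : ∀ x τ, ρs * DT (DT B) (x, τ) - β * DX (DX B) (x, τ)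
      + α * DX (DX (DX (DX B))) (x, τ) - γ * DX (DX (DT B)) (x, τ) = Q (x, τ) := by
    intro x τ
    have h := heq1 x τ
    have e1 : iteratedDeriv 2 (fun s => b x s) τ = DT (DT B) (x, τ) := by
      simpa using sliceT_iteratedDeriv hb 2 x τ
    have e2 : iteratedDeriv 2 (fun ξ => b ξ τ) x = DX (DX B) (x, τ) := by
      simpa using sliceX_iteratedDeriv hb 2 x τ
    have e4 : iteratedDeriv 4 (fun ξ => b ξ τ) x = DX (DX (DX (DX B))) (x, τ) := by
      exact sliceX_iteratedDeriv hb 4 x τ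
    have e3 : deriv (fun s => iteratedDeriv 2 (fun ξ => b ξ s) x) τ
        = DX (DX (DT B)) (x, τ) := by
      have hfun : (fun s => iteratedDeriv 2 (fun ξ => b ξ s) x)
          = fun s => DX (DX B) (x, s) := by
        funext s; simpa using sliceX_iteratedDeriv hb 2 x s
      rw [hfun, (hasDerivAt_sliceT (hdiff hB2 (x, τ))).deriv, ← comm2]
    rw [e1, e2, e3, e4] at h
    exact h
  have heq2' : ∀ x τ, DT B (x, τ) = DX H (x, τ) := by
    intro x τ
    have h := heq2 x τ
    have e0 : deriv (fun s => b x s) τ = DT B (x, τ) :=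
      (hasDerivAt_sliceT (hdiff hb (x, τ))).deriv
    have hfun : (fun ξ => (b ξ τ) ^ 3 * deriv (fun ζ => q ζ τ) ξ)
        = fun ξ => H (ξ, τ) := by
      funext ξ
      simp only [hHdef]
      congr 1
      exact (hasDerivAt_sliceX (hdiff hq (ξ, τ))).deriv
    rw [e0, hfun, (hasDerivAt_sliceX (hdiff hH (x, τ))).deriv] at h
    exact h
  -- energy density
  set F : ℝ × ℝ → ℝ := fun p => γ / 2 * (DX (DX B) p) ^ 2 + (2 * B p)⁻¹
      - ρs * DT B p * DX (DX B) p with hFdef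
  have hne : ∀ p : ℝ × ℝ, 2 * B p ≠ 0 := fun p => by
    have := hBpos p; positivity
  have hF : ContDiff ℝ (⊤ : ℕ∞) F := ((contDiff_const.mul (hB2.pow 2)).add
      ((contDiff_const.mul hb).inv hne)).sub ((contDiff_const.mul hm).mul hB2)
  -- rewrite the function whose time derivative is taken
  have hfun2 : (fun τ => ∫ x in (0:ℝ)..L,
      (γ / 2) * (iteratedDeriv 2 (fun ξ => b ξ τ) x) ^ 2 + 1 / (2 * b x τ)
        - ρs * deriv (fun s => b x s) τ * iteratedDeriv 2 (fun ξ => b ξ τ) x)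
      = fun τ => ∫ x in (0:ℝ)..L, F (x, τ) := by
    funext τ
    refine congrArg (fun g : ℝ → ℝ => ∫ x in (0:ℝ)..L, g x) (funext fun x => ?_)
    have e2 : iteratedDeriv 2 (fun ξ => b ξ τ) x = DX (DX B) (x, τ) := by
      simpa using sliceX_iteratedDeriv hb 2 x τ
    have e0 : deriv (fun s => b x s) τ = DT B (x, τ) :=
      (hasDerivAt_sliceT (hdiff hb (x, τ))).deriv
    rw [e2, e0, hFdef]
    simp [one_div, hBdef]
  rw [hfun2, (hasDerivAt_intervalIntegral_of_contDiff hF 0 L t).deriv]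
  -- slice derivative in time, pointwise
  set rp : ℝ → ℝ := fun x =>
    -(2 * ((2:ℝ) * B (x, t) ^ 1 * DX B (x, t))) / (2 * B (x, t) ^ 2) ^ 2 with hrpdef
  have hBne : ∀ x τ, B (x, τ) ≠ 0 := fun x τ => ne_of_gt (hBpos (x, τ))
  have hkey : ∀ x : ℝ,
      DT F (x, t) + (β * (DX (DX B) (x, t)) ^ 2 + α * (DX (DX (DX B)) (x, t)) ^ 2)
        - ρs * (DX (DT B) (x, t)) ^ 2
      = α * (DX (DX (DX (DX B))) (x, t) * DX (DX B) (x, t)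
            + DX (DX (DX B)) (x, t) * DX (DX (DX B)) (x, t))
        - (DX (DX B) (x, t) * Q (x, t) + DX B (x, t) * DX Q (x, t))
        - ρs * (DX (DX (DT B)) (x, t) * DT B (x, t)
            + DX (DT B) (x, t) * DX (DT B) (x, t))
        - (DX H (x, t) * (2 * B (x, t) ^ 2)⁻¹ + H (x, t) * rp x) := by
    intro x
    have hA := hasDerivAt_sliceT (hdiff hB2 (x, t))
    have hBt := hasDerivAt_sliceT (hdiff hb (x, t))
    have hW := hasDerivAt_sliceT (hdiff hm (x, t))
    have h1 := (hA.pow 2).const_mul (γ / 2)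
    have h2 := (hBt.const_mul (2:ℝ)).inv (hne (x, t))
    have h3 := (hW.const_mul ρs).mul hA
    have hcomb := (h1.add h2).sub h3
    have hslice : HasDerivAt (fun τ => F (x, τ))
        (γ / 2 * (↑2 * DX (DX B) (x, t) ^ (2 - 1) * DT (DX (DX B)) (x, t))
          + -(2 * DT B (x, t)) / (2 * B (x, t)) ^ 2
          - (ρs * DT (DT B) (x, t) * DX (DX B) (x, t)
              + ρs * DT B (x, t) * DT (DX (DX B)) (x, t))) t := by
      simp only [hFdef]
      exact hcomb
    have hDTF := (hasDerivAt_sliceT (hdiff hF (x, t))).unique hslice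
    have hsub : ρs * DT (DT B) (x, t) = Q (x, t) + β * DX (DX B) (x, t)
        - α * DX (DX (DX (DX B))) (x, t) + γ * DX (DX (DT B)) (x, t) := by
      linarith [heq1' x t]
    rw [hDTF, comm2, hsub, ← heq2' x t, hrpdef]
    have hH' : H (x, t) = B (x, t) ^ 3 * DX Q (x, t) := by rw [hHdef]
    rw [hH']
    have h0 := hBne x t
    field_simp
    ring
  -- continuity of slices
  have contS : ∀ {g : ℝ × ℝ → ℝ}, Continuous g → Continuous fun x : ℝ => g (x, t) :=
    fun hg => hg.comp (continuous_id.prodMk continuous_const)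
  have bd : ∀ {g : ℝ × ℝ → ℝ}, ContDiff ℝ (⊤ : ℕ∞) g → ∀ x : ℝ,
      HasDerivAt (fun ξ => g (ξ, t)) (DX g (x, t)) x :=
    fun hg x => hasDerivAt_sliceX (hdiff hg (x, t))
  have bnd : ∀ {g : ℝ × ℝ → ℝ}, (∀ x τ, g (x + L, τ) = g (x, τ)) →
      g (L, t) = g (0, t) := fun hper => by simpa using hper 0 t
  -- the four integration-by-parts identities
  have G1 : ∫ x in (0:ℝ)..L, (DX (DX (DX (DX B))) (x, t) * DX (DX B) (x, t)
      + DX (DX (DX B)) (x, t) * DX (DX (DX B)) (x, t)) = 0 :=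
    ibp_per_zero (bd hB3) (bd hB2) (contS hB4.continuous) (contS hB3.continuous)
      (bnd perB3) (bnd perB2)
  have G2 : ∫ x in (0:ℝ)..L, (DX (DX B) (x, t) * Q (x, t)
      + DX B (x, t) * DX Q (x, t)) = 0 :=
    ibp_per_zero (bd hB1) (bd hq) (contS hB2.continuous) (contS hQ1.continuous)
      (bnd perB1) (bnd perQ)
  have G3 : ∫ x in (0:ℝ)..L, (DX (DX (DT B)) (x, t) * DT B (x, t)
      + DX (DT B) (x, t) * DX (DT B) (x, t)) = 0 :=
    ibp_per_zero (bd hm1) (bd hm) (contS hm2.continuous) (contS hm1.continuous)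
      (bnd perm1) (bnd perm)
  have hden : ∀ x : ℝ, (2 * B (x, t) ^ 2) ≠ 0 := fun x => by
    have := hBpos (x, t); positivity
  have hr : ∀ x : ℝ, HasDerivAt (fun ξ => (2 * B (ξ, t) ^ 2)⁻¹) (rp x) x := by
    intro x
    have h := (((bd hb x).pow 2).const_mul (2:ℝ)).inv (hden x)
    exact h
  have hrpc : Continuous rp := by
    rw [hrpdef]
    refine Continuous.div ?_ ?_ (fun x => pow_ne_zero 2 (hden x))
    · exact (continuous_const.mul ((continuous_const.mul
        ((contS hb.continuous).pow 1)).mul (contS hB1.continuous))).neg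
    · exact (continuous_const.mul ((contS hb.continuous).pow 2)).pow 2
  have G4 : ∫ x in (0:ℝ)..L, (DX H (x, t) * (2 * B (x, t) ^ 2)⁻¹
      + H (x, t) * rp x) = 0 :=
    ibp_per_zero (bd hH) hr (contS hH1.continuous) hrpc (bnd perH)
      (congrArg (fun y => (2 * y ^ 2)⁻¹) (bnd perB))
  -- rewrite the two remaining integrals in slice form
  have hfun3 : (fun x => β * (iteratedDeriv 2 (fun ξ => b ξ t) x) ^ 2
      + α * (iteratedDeriv 3 (fun ξ => b ξ t) x) ^ 2)
      = fun x => β * (DX (DX B) (x, t)) ^ 2 + α * (DX (DX (DX B)) (x, t)) ^ 2 := by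
    funext x
    have e2 : iteratedDeriv 2 (fun ξ => b ξ t) x = DX (DX B) (x, t) := by
      simpa using sliceX_iteratedDeriv hb 2 x t
    have e3 : iteratedDeriv 3 (fun ξ => b ξ t) x = DX (DX (DX B)) (x, t) :=
      sliceX_iteratedDeriv hb 3 x t
    rw [e2, e3]
  have hfun4 : (fun x => ρs * (deriv (fun τ => deriv (fun ξ => b ξ τ) x) t) ^ 2)
      = fun x => ρs * (DX (DT B) (x, t)) ^ 2 := by
    funext x
    have hin : (fun τ => deriv (fun ξ => b ξ τ) x) = fun τ => DX B (x, τ) := by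
      funext τ
      exact (hasDerivAt_sliceX (hdiff hb (x, τ))).deriv
    rw [hin, (hasDerivAt_sliceT (hdiff hB1 (x, t))).deriv, ← comm0]
  rw [congrArg (fun g : ℝ → ℝ => ∫ x in (0:ℝ)..L, g x) hfun3,
    congrArg (fun g : ℝ → ℝ => ∫ x in (0:ℝ)..L, g x) hfun4]
  -- continuity of integrands
  have cg1 : Continuous (fun x : ℝ => DX (DX (DX (DX B))) (x, t) * DX (DX B) (x, t)
      + DX (DX (DX B)) (x, t) * DX (DX (DX B)) (x, t)) :=
    ((contS hB4.continuous).mul (contS hB2.continuous)).add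
      ((contS hB3.continuous).mul (contS hB3.continuous))
  have cg2 : Continuous (fun x : ℝ => DX (DX B) (x, t) * Q (x, t)
      + DX B (x, t) * DX Q (x, t)) :=
    ((contS hB2.continuous).mul (contS hq.continuous)).add
      ((contS hB1.continuous).mul (contS hQ1.continuous))
  have cg3 : Continuous (fun x : ℝ => DX (DX (DT B)) (x, t) * DT B (x, t)
      + DX (DT B) (x, t) * DX (DT B) (x, t)) :=
    ((contS hm2.continuous).mul (contS hm.continuous)).add
      ((contS hm1.continuous).mul (contS hm1.continuous))
  have cg4 : Continuous (fun x : ℝ => DX H (x, t) * (2 * B (x, t) ^ 2)⁻¹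
      + H (x, t) * rp x) :=
    ((contS hH1.continuous).mul (Continuous.inv₀
        (continuous_const.mul ((contS hb.continuous).pow 2)) hden)).add
      ((contS hH.continuous).mul hrpc)
  have I1 : IntervalIntegrable (fun x => DT F (x, t)) volume 0 L :=
    (contS hF.dt.continuous).intervalIntegrable 0 L
  have cX : Continuous (fun x : ℝ => β * (DX (DX B) (x, t)) ^ 2
      + α * (DX (DX (DX B)) (x, t)) ^ 2) :=
    (continuous_const.mul ((contS hB2.continuous).pow 2)).add
      (continuous_const.mul ((contS hB3.continuous).pow 2))
  have I2 : IntervalIntegrable (fun x : ℝ => β * (DX (DX B) (x, t)) ^ 2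
      + α * (DX (DX (DX B)) (x, t)) ^ 2) volume 0 L := cX.intervalIntegrable 0 L
  have I3 : IntervalIntegrable (fun x : ℝ => ρs * (DX (DT B) (x, t)) ^ 2) volume 0 L :=
    (continuous_const.mul ((contS hm1.continuous).pow 2)).intervalIntegrable 0 L
  -- the combined integral vanishes
  have hC : ∫ x in (0:ℝ)..L,
      (DT F (x, t) + (β * (DX (DX B) (x, t)) ^ 2 + α * (DX (DX (DX B)) (x, t)) ^ 2)
        - ρs * (DX (DT B) (x, t)) ^ 2) = 0 := by
    rw [intervalIntegral.integral_congr (g := fun x =>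
      α * (DX (DX (DX (DX B))) (x, t) * DX (DX B) (x, t)
            + DX (DX (DX B)) (x, t) * DX (DX (DX B)) (x, t))
        - (DX (DX B) (x, t) * Q (x, t) + DX B (x, t) * DX Q (x, t))
        - ρs * (DX (DX (DT B)) (x, t) * DT B (x, t)
            + DX (DT B) (x, t) * DX (DT B) (x, t))
        - (DX H (x, t) * (2 * B (x, t) ^ 2)⁻¹ + H (x, t) * rp x)) (fun x _ => hkey x)]
    rw [intervalIntegral.integral_sub (f := fun x => α * (DX (DX (DX (DX B))) (x, t) * DX (DX B) (x, t) + DX (DX (DX B)) (x, t) * DX (DX (DX B)) (x, t)) - (DX (DX B) (x, t) * Q (x, t) + DX B (x, t) * DX Q (x, t)) - ρs * (DX (DX (DT B)) (x, t) * DT B (x, t) + DX (DT B) (x, t) * DX (DT B) (x, t))) (g := fun x => DX H (x, t) * (2 * B (x, t) ^ 2)⁻¹ + H (x, t) * rp x) ((((continuous_const.mul cg1).sub cg2).sub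
        (continuous_const.mul cg3)).intervalIntegrable 0 L) (cg4.intervalIntegrable 0 L),
      intervalIntegral.integral_sub (f := fun x => α * (DX (DX (DX (DX B))) (x, t) * DX (DX B) (x, t) + DX (DX (DX B)) (x, t) * DX (DX (DX B)) (x, t)) - (DX (DX B) (x, t) * Q (x, t) + DX B (x, t) * DX Q (x, t))) (g := fun x => ρs * (DX (DX (DT B)) (x, t) * DT B (x, t) + DX (DT B) (x, t) * DX (DT B) (x, t))) (((continuous_const.mul cg1).sub cg2).intervalIntegrable 0 L)
        ((continuous_const.mul cg3).intervalIntegrable 0 L),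
      intervalIntegral.integral_sub (f := fun x => α * (DX (DX (DX (DX B))) (x, t) * DX (DX B) (x, t) + DX (DX (DX B)) (x, t) * DX (DX (DX B)) (x, t))) (g := fun x => DX (DX B) (x, t) * Q (x, t) + DX B (x, t) * DX Q (x, t)) ((continuous_const.mul cg1).intervalIntegrable 0 L)
        (cg2.intervalIntegrable 0 L),
      intervalIntegral.integral_const_mul, intervalIntegral.integral_const_mul,
      G1, G2, G3, G4]
    ring
  have hsplit : ∫ x in (0:ℝ)..L,
      (DT F (x, t) + (β * (DX (DX B) (x, t)) ^ 2 + α * (DX (DX (DX B)) (x, t)) ^ 2)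
        - ρs * (DX (DT B) (x, t)) ^ 2)
      = (∫ x in (0:ℝ)..L, DT F (x, t))
        + (∫ x in (0:ℝ)..L, (β * (DX (DX B) (x, t)) ^ 2
            + α * (DX (DX (DX B)) (x, t)) ^ 2))
        - ∫ x in (0:ℝ)..L, ρs * (DX (DT B) (x, t)) ^ 2 := by
    rw [intervalIntegral.integral_sub (I1.add I2) I3, intervalIntegral.integral_add I1 I2]
  linarith [hC, hsplit]
end
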